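/- arXiv:2110.01046 — 6 statements merged into one kernel-verified Lean document; each statement's English description precedes it below -/
import Mathlib

section
/- Let f : ℝ → ℝ be twice differentiable and strictly increasing on some ray [x₀, ∞) with f(x) → ∞ as x → ∞ and f'(x) > 0 there, and suppose f satisfies the growth condition with exponent λ ∈ (0, 1], i.e., there exist constants 0 < c₁ ≤ c₂ such that c₁ x^{-λ} ≤ f''(x)/f'(x) ≤ c₂ x^{-λ} for all sufficiently large x. Then f'(x)·x^λ ≍ f(x) as x → ∞, i.e., there exist constants 0 < C₁ ≤ C₂ such that C₁ f(x) ≤ f'(x)·x^λ ≤ C₂ f(x) for all sufficiently large x. -/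
open Filter Set Topology

/-! Put `u(x) = f'(x) x^λ`, so that `u' = f'' x^λ + λ f' x^(λ-1)`. For `x ≥ 1` the growth
condition and `0 ≤ λ x^(λ-1) ≤ λ` give `c₁ f' ≤ u' ≤ (c₂ + λ) f'`. Integrating from a fixed
base point `a`, the increments of `u` and of `f` are comparable, and since `f → ∞` the values
at `a` are eventually negligible. -/

/-- The growth condition with exponent `lam` on the ray `[x₀, ∞)`:
`f` is twice differentiable and strictly increasing on the ray, tends to infinity,
has positive derivative there, and `f''/f' ≍ x^(-lam)` at infinity. -/
def GrowthCondition (f : ℝ → ℝ) (lam x₀ : ℝ) : Prop :=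
  (∀ x ∈ Set.Ici x₀, DifferentiableAt ℝ f x) ∧
  (∀ x ∈ Set.Ici x₀, DifferentiableAt ℝ (deriv f) x) ∧
  StrictMonoOn f (Set.Ici x₀) ∧
  Filter.Tendsto f Filter.atTop Filter.atTop ∧
  (∀ x ∈ Set.Ici x₀, 0 < deriv f x) ∧
  ∃ c₁ c₂ : ℝ, 0 < c₁ ∧ c₁ ≤ c₂ ∧
    ∀ᶠ x in Filter.atTop,
      c₁ * x ^ (-lam) ≤ deriv (deriv f) x / deriv f x ∧
      deriv (deriv f) x / deriv f x ≤ c₂ * x ^ (-lam)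

theorem sub_le_sub_of_hasDerivAt_le {f g f' g' : ℝ → ℝ} {a x : ℝ}
    (hf : ∀ y ∈ Ici a, HasDerivAt f (f' y) y) (hg : ∀ y ∈ Ici a, HasDerivAt g (g' y) y)
    (hle : ∀ y ∈ Ici a, f' y ≤ g' y) (hx : a ≤ x) : f x - f a ≤ g x - g a := by
  have hmono : MonotoneOn (fun y => g y - f y) (Ici a) :=
    monotoneOn_of_hasDerivWithinAt_nonneg (convex_Ici a)
      (fun y hy => ((hg y hy).sub (hf y hy)).continuousAt.continuousWithinAt)
      (fun y hy => ((hg y (interior_subset hy)).sub (hf y (interior_subset hy))).hasDerivWithinAt)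
      (fun y hy => sub_nonneg.2 (hle y (interior_subset hy)))
  have := hmono self_mem_Ici hx hx
  linarith

theorem Filter.Tendsto.eventually_half_mul_le_of_mul_sub_le_sub {α : Type*} {l : Filter α}
    {f u : α → ℝ} (hf : Tendsto f l atTop) {c f₀ u₀ : ℝ} (hc : 0 ≤ c) (hu₀ : 0 ≤ u₀)
    (h : ∀ᶠ x in l, c * (f x - f₀) ≤ u x - u₀) : ∀ᶠ x in l, c / 2 * f x ≤ u x := by
  filter_upwards [h, hf.eventually_ge_atTop (2 * f₀)] with x hx hfx
  nlinarith

theorem Filter.Tendsto.eventually_le_two_mul_of_sub_le_mul_sub {α : Type*} {l : Filter α}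
    {f u : α → ℝ} (hf : Tendsto f l atTop) {C f₀ u₀ : ℝ} (hC : 0 < C)
    (h : ∀ᶠ x in l, u x - u₀ ≤ C * (f x - f₀)) : ∀ᶠ x in l, u x ≤ 2 * C * f x := by
  filter_upwards [h, hf.eventually_ge_atTop ((u₀ - C * f₀) / C)] with x hx hfx
  have : u₀ - C * f₀ ≤ C * f x := by rwa [div_le_iff₀' hC] at hfx
  linarith

theorem mul_rpow_add_mul_rpow_sub_one_mem_Icc {lam x p q c₁ c₂ : ℝ}
    (hlam : lam ∈ Ioc (0 : ℝ) 1) (hx : 1 ≤ x) (hp : 0 < p)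
    (h₁ : c₁ * x ^ (-lam) ≤ q / p) (h₂ : q / p ≤ c₂ * x ^ (-lam)) :
    q * x ^ lam + p * (lam * x ^ (lam - 1)) ∈ Icc (c₁ * p) ((c₂ + lam) * p) := by
  have hx₀ : 0 < x := one_pos.trans_le hx
  have hxlam : 0 < x ^ lam := Real.rpow_pos_of_pos hx₀ lam
  rw [Real.rpow_neg hx₀.le, ← div_eq_mul_inv] at h₁ h₂
  rw [div_le_div_iff₀ hxlam hp] at h₁
  rw [div_le_div_iff₀ hp hxlam] at h₂
  have hpow : x ^ (lam - 1) ≤ 1 := Real.rpow_le_one_of_one_le_of_nonpos hx (by linarith [hlam.2])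
  have hterm_nonneg : 0 ≤ p * (lam * x ^ (lam - 1)) := by
    have := hlam.1; positivity
  have hterm_le : p * (lam * x ^ (lam - 1)) ≤ p * lam :=
    mul_le_mul_of_nonneg_left (mul_le_of_le_one_right hlam.1.le hpow) hp.le
  constructor <;> linarith

theorem GrowthCondition.exists_sub_bounds {f : ℝ → ℝ} {lam x₀ : ℝ}
    (hlam : lam ∈ Ioc (0 : ℝ) 1) (hf : GrowthCondition f lam x₀) :
    ∃ a c C : ℝ, 0 < c ∧ c ≤ C ∧ 0 < deriv f a * a ^ lam ∧
      (∀ᶠ x in atTop, c * (f x - f a) ≤ deriv f x * x ^ lam - deriv f a * a ^ lam) ∧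
      ∀ᶠ x in atTop, deriv f x * x ^ lam - deriv f a * a ^ lam ≤ C * (f x - f a) := by
  obtain ⟨hd₁, hd₂, -, -, hpos, c₁, c₂, hc₁, hc₁₂, hev⟩ := hf
  obtain ⟨b, hb⟩ := eventually_atTop.mp hev
  set a := max x₀ (max 1 b)
  have hmem : ∀ x ∈ Ici a, x₀ ≤ x ∧ 1 ≤ x ∧ b ≤ x := fun x hx => by
    simpa only [a, mem_Ici, max_le_iff] using hx
  have hf' : ∀ x ∈ Ici a, HasDerivAt f (deriv f x) x := fun x hx =>
    (hd₁ x (hmem x hx).1).hasDerivAt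
  have hu : ∀ x ∈ Ici a, HasDerivAt (fun y => deriv f y * y ^ lam)
      (deriv (deriv f) x * x ^ lam + deriv f x * (lam * x ^ (lam - 1))) x := fun x hx =>
    (hd₂ x (hmem x hx).1).hasDerivAt.mul
      (Real.hasDerivAt_rpow_const (Or.inl (one_pos.trans_le (hmem x hx).2.1).ne'))
  have hu' : ∀ x ∈ Ici a, deriv (deriv f) x * x ^ lam + deriv f x * (lam * x ^ (lam - 1)) ∈
      Icc (c₁ * deriv f x) ((c₂ + lam) * deriv f x) := fun x hx =>
    mul_rpow_add_mul_rpow_sub_one_mem_Icc hlam (hmem x hx).2.1 (hpos x (hmem x hx).1)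
      (hb x (hmem x hx).2.2).1 (hb x (hmem x hx).2.2).2
  obtain ⟨hx₀a, h1a, -⟩ := hmem a self_mem_Ici
  refine ⟨a, c₁, c₂ + lam, hc₁, by linarith [hlam.1],
    mul_pos (hpos a hx₀a) (Real.rpow_pos_of_pos (one_pos.trans_le h1a) lam), ?_, ?_⟩
  · filter_upwards [eventually_ge_atTop a] with x hx
    have := sub_le_sub_of_hasDerivAt_le (fun y hy => (hf' y hy).const_mul c₁) hu
      (fun y hy => (hu' y hy).1) hx
    linarith
  · filter_upwards [eventually_ge_atTop a] with x hx
    have := sub_le_sub_of_hasDerivAt_le hu (fun y hy => (hf' y hy).const_mul (c₂ + lam))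
      (fun y hy => (hu' y hy).2) hx
    linarith

/-- If `f` satisfies the growth condition with exponent `lam ∈ (0,1]`, then
`f'(x)·x^lam ≍ f(x)` as `x → ∞`. -/
theorem deriv_mul_rpow_asymp_self (f : ℝ → ℝ) (lam x₀ : ℝ)
    (hlam : lam ∈ Set.Ioc (0 : ℝ) 1)
    (hf : GrowthCondition f lam x₀) :
    ∃ C₁ C₂ : ℝ, 0 < C₁ ∧ C₁ ≤ C₂ ∧
      ∀ᶠ x in atTop,
        C₁ * f x ≤ deriv f x * x ^ lam ∧ deriv f x * x ^ lam ≤ C₂ * f x := by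
  have htend : Tendsto f atTop atTop := hf.2.2.2.1
  obtain ⟨a, c, C, hc, hcC, hua, hlower, hupper⟩ := hf.exists_sub_bounds hlam
  refine ⟨c / 2, 2 * C, by positivity, by linarith, ?_⟩
  exact (htend.eventually_half_mul_le_of_mul_sub_le_sub hc.le hua.le hlower).and
    (htend.eventually_le_two_mul_of_sub_le_mul_sub (hc.trans_le hcC) hupper)
end

section
/- Let f satisfy the growth condition with exponent λ ∈ (0, 1). Then the inverse function f⁻¹ satisfies f⁻¹(x) ≍ (ln x)^{1/(1−λ)} as x → ∞, i.e., there exist constants 0 < C₁ ≤ C₂ such that C₁ (ln x)^{1/(1−λ)} ≤ f⁻¹(x) ≤ C₂ (ln x)^{1/(1−λ)} for all sufficiently large x. -/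
open Filter Set Topology

/-- `g` is a (two-sided) inverse of `f` relative to the ray `[x₀, ∞)`. -/
def IsInverseOn (f g : ℝ → ℝ) (x₀ : ℝ) : Prop :=
  (∀ x ∈ Set.Ici x₀, g (f x) = x) ∧ (∀ y ∈ Set.Ici (f x₀), f (g y) = y)

/-!
Integrating `c₁ x^(-λ) ≤ (log f')' ≤ c₂ x^(-λ)` gives `log f'(x) ≍ x^(1-λ)`. Since `f'` is
eventually increasing, the mean value theorem squeezes `f(x)` between `f'(x/2)` and `2x f'(x)`,
and the factor `2x` is negligible against `exp (x^(1-λ))`, so `log f(x) ≍ x^(1-λ)` as well.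
Evaluating this at `x = f⁻¹(y)` gives `log y ≍ (f⁻¹ y)^(1-λ)`, i.e. `f⁻¹(y) ≍ (log y)^(1/(1-λ))`.
-/

theorem exists_le_add_of_hasDerivAt_le {F G F' G' : ℝ → ℝ}
    (hF : ∀ᶠ x in atTop, HasDerivAt F (F' x) x) (hG : ∀ᶠ x in atTop, HasDerivAt G (G' x) x)
    (hle : ∀ᶠ x in atTop, F' x ≤ G' x) : ∃ C, ∀ᶠ x in atTop, F x ≤ G x + C := by
  obtain ⟨a, ha⟩ := eventually_atTop.1 (hF.and (hG.and hle))
  have hderiv : ∀ x ∈ Ici a, HasDerivAt (fun y => G y - F y) (G' x - F' x) x :=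
    fun x hx => (ha x hx).2.1.sub (ha x hx).1
  have hmono : MonotoneOn (fun y => G y - F y) (Ici a) := by
    refine monotoneOn_of_hasDerivWithinAt_nonneg (f' := fun x => G' x - F' x) (convex_Ici a)
      (fun x hx => (hderiv x hx).continuousAt.continuousWithinAt) (fun x hx => ?_) (fun x hx => ?_)
    all_goals rw [interior_Ici] at hx
    · exact (hderiv x (Ioi_subset_Ici_self hx)).hasDerivWithinAt
    · exact sub_nonneg.2 (ha x (le_of_lt hx)).2.2
  refine ⟨F a - G a, (eventually_ge_atTop a).mono fun x hx => ?_⟩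
  have := hmono self_mem_Ici hx hx
  simp only at this
  linarith

theorem hasDerivAt_div_mul_rpow {s : ℝ} (hs : s ≠ 0) (c : ℝ) {x : ℝ} (hx : x ≠ 0) :
    HasDerivAt (fun y => c / s * y ^ s) (c * x ^ (s - 1)) x := by
  have := (Real.hasDerivAt_rpow_const (p := s) (Or.inl hx)).const_mul (c / s)
  rwa [← mul_assoc, div_mul_cancel₀ c hs] at this

theorem exists_mul_rpow_le_of_mul_rpow_le_deriv {u u' : ℝ → ℝ} {s c : ℝ} (hs : 0 < s)
    (hc : 0 < c) (hu : ∀ᶠ x in atTop, HasDerivAt u (u' x) x)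
    (hle : ∀ᶠ x in atTop, c * x ^ (s - 1) ≤ u' x) :
    ∃ A, 0 < A ∧ ∀ᶠ x in atTop, A * x ^ s ≤ u x := by
  obtain ⟨C, hC⟩ := exists_le_add_of_hasDerivAt_le
    ((eventually_gt_atTop 0).mono fun x hx => hasDerivAt_div_mul_rpow hs.ne' c hx.ne') hu hle
  refine ⟨c / s / 2, by positivity, ?_⟩
  filter_upwards [hC, (tendsto_rpow_atTop hs).eventually_ge_atTop (C / (c / s / 2))]
    with x hx hCx
  rw [div_le_iff₀ (by positivity)] at hCx
  linarith

theorem exists_le_mul_rpow_of_deriv_le_mul_rpow {u u' : ℝ → ℝ} {s c : ℝ} (hs : 0 < s)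
    (hu : ∀ᶠ x in atTop, HasDerivAt u (u' x) x)
    (hle : ∀ᶠ x in atTop, u' x ≤ c * x ^ (s - 1)) :
    ∃ B, ∀ᶠ x in atTop, u x ≤ B * x ^ s := by
  obtain ⟨C, hC⟩ := exists_le_add_of_hasDerivAt_le hu
    ((eventually_gt_atTop 0).mono fun x hx => hasDerivAt_div_mul_rpow hs.ne' c hx.ne') hle
  refine ⟨c / s + 1, ?_⟩
  filter_upwards [hC, (tendsto_rpow_atTop hs).eventually_ge_atTop C] with x hx hCx
  linarith

theorem eventually_add_log_le_rpow {s : ℝ} (hs : 0 < s) (c : ℝ) :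
    ∀ᶠ x in atTop, c + Real.log x ≤ x ^ s := by
  filter_upwards [(isLittleO_log_rpow_atTop hs).bound (c := 1 / 2) (by norm_num),
    (tendsto_rpow_atTop hs).eventually_ge_atTop (2 * c), eventually_ge_atTop 0] with x hlog hc hx
  rw [Real.norm_eq_abs, Real.norm_of_nonneg (Real.rpow_nonneg hx s)] at hlog
  linarith [le_abs_self (Real.log x)]

theorem tendsto_atTop_of_leftInvOn {f g : ℝ → ℝ} {a : ℝ} (hf : ContinuousOn f (Ici a))
    (htop : Tendsto f atTop atTop) (hgf : LeftInvOn g f (Ici a)) : Tendsto g atTop atTop := by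
  refine tendsto_atTop.2 fun b => ?_
  have hsub : Ici (max a b) ⊆ Ici a := Ici_subset_Ici.2 (le_max_left a b)
  filter_upwards [eventually_ge_atTop (f (max a b))] with y hy
  obtain ⟨x, hx, rfl⟩ := intermediate_value_Ici (hf.mono hsub) htop hy
  rw [hgf (hsub hx)]
  exact (le_max_right a b).trans hx

theorem mul_deriv_le_sub_of_monotoneOn_deriv {f : ℝ → ℝ} {x y : ℝ}
    (hdiff : ∀ z ∈ Icc x y, DifferentiableAt ℝ f z) (hmono : MonotoneOn (deriv f) (Icc x y))
    (hxy : x ≤ y) : deriv f x * (y - x) ≤ f y - f x :=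
  (convex_Icc x y).mul_sub_le_image_sub_of_le_deriv
    (fun z hz => (hdiff z hz).continuousAt.continuousWithinAt)
    (fun z hz => (hdiff z (interior_subset hz)).differentiableWithinAt)
    (fun _ hz => hmono (left_mem_Icc.2 hxy) (interior_subset hz) (interior_subset hz).1)
    x (left_mem_Icc.2 hxy) y (right_mem_Icc.2 hxy) hxy

theorem sub_le_deriv_mul_of_monotoneOn_deriv {f : ℝ → ℝ} {x y : ℝ}
    (hdiff : ∀ z ∈ Icc x y, DifferentiableAt ℝ f z) (hmono : MonotoneOn (deriv f) (Icc x y))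
    (hxy : x ≤ y) : f y - f x ≤ deriv f y * (y - x) :=
  (convex_Icc x y).image_sub_le_mul_sub_of_deriv_le
    (fun z hz => (hdiff z hz).continuousAt.continuousWithinAt)
    (fun z hz => (hdiff z (interior_subset hz)).differentiableWithinAt)
    (fun _ hz => hmono (interior_subset hz) (right_mem_Icc.2 hxy) (interior_subset hz).2)
    x (left_mem_Icc.2 hxy) y (right_mem_Icc.2 hxy) hxy

section MonotoneDeriv

variable {f : ℝ → ℝ} {a s : ℝ}

theorem exists_mul_rpow_le_log_of_log_deriv {A : ℝ} (hA : 0 < A)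
    (hdiff : ∀ x ∈ Ici a, DifferentiableAt ℝ f x) (hpos : ∀ x ∈ Ici a, 0 < deriv f x)
    (hmono : MonotoneOn (deriv f) (Ici a)) (htop : Tendsto f atTop atTop)
    (hlog : ∀ᶠ x in atTop, A * x ^ s ≤ Real.log (deriv f x)) :
    ∃ A', 0 < A' ∧ ∀ᶠ x in atTop, A' * x ^ s ≤ Real.log (f x) := by
  refine ⟨A / 2 ^ s, by positivity, ?_⟩
  have half : Tendsto (fun x : ℝ => x / 2) atTop atTop := tendsto_id.atTop_div_const two_pos
  filter_upwards [eventually_ge_atTop 2, half.eventually (eventually_ge_atTop a),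
    half.eventually (htop.eventually_ge_atTop 0), half.eventually hlog] with x hx2 hxa hf0 hlogx
  have hsub : Icc (x / 2) x ⊆ Ici a := Icc_subset_Ici_self.trans (Ici_subset_Ici.2 hxa)
  have htangent := mul_deriv_le_sub_of_monotoneOn_deriv (fun z hz => hdiff z (hsub hz))
    (hmono.mono hsub) (by linarith : x / 2 ≤ x)
  have hpx := hpos (x / 2) hxa
  have hderiv_le : deriv f (x / 2) ≤ f x := by nlinarith
  calc A / 2 ^ s * x ^ s = A * (x / 2) ^ s := by
        rw [Real.div_rpow (by linarith) zero_le_two]; ring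
    _ ≤ Real.log (deriv f (x / 2)) := hlogx
    _ ≤ Real.log (f x) := Real.log_le_log hpx hderiv_le

theorem exists_log_le_mul_rpow_of_log_deriv {B : ℝ} (hs : 0 < s)
    (hdiff : ∀ x ∈ Ici a, DifferentiableAt ℝ f x) (hpos : ∀ x ∈ Ici a, 0 < deriv f x)
    (hmono : MonotoneOn (deriv f) (Ici a)) (htop : Tendsto f atTop atTop)
    (hlog : ∀ᶠ x in atTop, Real.log (deriv f x) ≤ B * x ^ s) :
    ∃ B', ∀ᶠ x in atTop, Real.log (f x) ≤ B' * x ^ s := by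
  set b := max a 0
  have hb : b ∈ Ici a := le_max_left a 0
  refine ⟨B + 1, ?_⟩
  filter_upwards [eventually_ge_atTop b, eventually_gt_atTop 0,
    eventually_ge_atTop (f b / deriv f b), htop.eventually_gt_atTop 0, hlog,
    eventually_add_log_le_rpow hs (Real.log 2)] with x hxb hx0 hxf hfx hlogx hlog2
  have hsub : Icc b x ⊆ Ici a := Icc_subset_Ici_self.trans (Ici_subset_Ici.2 hb)
  have hsecant := sub_le_deriv_mul_of_monotoneOn_deriv (fun z hz => hdiff z (hsub hz))
    (hmono.mono hsub) hxb
  have hfb : f b ≤ x * deriv f x := calc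
    f b ≤ x * deriv f b := (div_le_iff₀ (hpos b hb)).1 hxf
    _ ≤ x * deriv f x := mul_le_mul_of_nonneg_left (hmono hb (hb.trans hxb) hxb) hx0.le
  have hpx := hpos x (hb.trans hxb)
  have hfx_le : f x ≤ 2 * x * deriv f x := by nlinarith [le_max_right a 0]
  calc Real.log (f x) ≤ Real.log (2 * x * deriv f x) := Real.log_le_log hfx hfx_le
    _ = Real.log 2 + Real.log x + Real.log (deriv f x) := by
        rw [Real.log_mul (by positivity) hpx.ne', Real.log_mul two_ne_zero hx0.ne']
    _ ≤ (B + 1) * x ^ s := by linarith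

end MonotoneDeriv

theorem eventually_rpow_log_bounds_of_log_bounds {f g : ℝ → ℝ} {s A B : ℝ} (hs : 0 < s)
    (hA : 0 < A) (hB : 0 < B) (hg : Tendsto g atTop atTop) (hfg : ∀ᶠ y in atTop, f (g y) = y)
    (hlog : ∀ᶠ x in atTop, A * x ^ s ≤ Real.log (f x) ∧ Real.log (f x) ≤ B * x ^ s) :
    ∀ᶠ y in atTop, B⁻¹ ^ (1 / s) * Real.log y ^ (1 / s) ≤ g y ∧
      g y ≤ A⁻¹ ^ (1 / s) * Real.log y ^ (1 / s) := by
  filter_upwards [hfg, hg.eventually hlog, hg.eventually (eventually_ge_atTop 0)]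
    with y hy hbounds hg0
  rw [hy] at hbounds
  obtain ⟨hlo, hhi⟩ := hbounds
  have hlog0 : 0 ≤ Real.log y := (mul_nonneg hA.le (Real.rpow_nonneg hg0 s)).trans hlo
  rw [← Real.mul_rpow (inv_nonneg.2 hB.le) hlog0, ← Real.mul_rpow (inv_nonneg.2 hA.le) hlog0,
    one_div, Real.rpow_inv_le_iff_of_pos (by positivity) hg0 hs, inv_mul_le_iff₀ hB,
    Real.le_rpow_inv_iff_of_pos hg0 (by positivity) hs, le_inv_mul_iff₀ hA]
  exact ⟨hhi, hlo⟩

namespace GrowthCondition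

variable {f : ℝ → ℝ} {lam x₀ : ℝ}

theorem hasDerivAt_log_deriv (hf : GrowthCondition f lam x₀) {x : ℝ} (hx : x ∈ Ici x₀) :
    HasDerivAt (fun y => Real.log (deriv f y)) (deriv (deriv f) x / deriv f x) x :=
  (hf.2.1 x hx).hasDerivAt.log (hf.2.2.2.2.1 x hx).ne'

theorem exists_log_deriv_bounds (hf : GrowthCondition f lam x₀) (hlam : lam < 1) :
    ∃ A B, 0 < A ∧ ∀ᶠ x in atTop, A * x ^ (1 - lam) ≤ Real.log (deriv f x) ∧
      Real.log (deriv f x) ≤ B * x ^ (1 - lam) := by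
  have hu : ∀ᶠ x in atTop, HasDerivAt (fun y => Real.log (deriv f y))
      (deriv (deriv f) x / deriv f x) x :=
    (eventually_ge_atTop x₀).mono fun x hx => hf.hasDerivAt_log_deriv hx
  obtain ⟨-, -, -, -, -, c₁, c₂, hc₁, -, hbounds⟩ := hf
  have hs : 0 < 1 - lam := sub_pos.2 hlam
  have hexp : 1 - lam - 1 = -lam := by ring
  obtain ⟨A, hA, hlo⟩ := exists_mul_rpow_le_of_mul_rpow_le_deriv hs hc₁ hu
    (hbounds.mono fun x hx => hexp ▸ hx.1)
  obtain ⟨B, hhi⟩ := exists_le_mul_rpow_of_deriv_le_mul_rpow hs hu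
    (hbounds.mono fun x hx => hexp ▸ hx.2)
  exact ⟨A, B, hA, hlo.and hhi⟩

theorem exists_monotoneOn_deriv (hf : GrowthCondition f lam x₀) :
    ∃ a ∈ Ici x₀, MonotoneOn (deriv f) (Ici a) := by
  obtain ⟨-, hdiff₂, -, -, hpos, c₁, _, hc₁, -, hbounds⟩ := hf
  obtain ⟨t, ht⟩ := eventually_atTop.1 (hbounds.and (eventually_gt_atTop 0))
  have hsub : Ici (max x₀ t) ⊆ Ici x₀ := Ici_subset_Ici.2 (le_max_left x₀ t)
  refine ⟨max x₀ t, le_max_left x₀ t, monotoneOn_of_deriv_nonneg (convex_Ici _)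
    (fun x hx => (hdiff₂ x (hsub hx)).continuousAt.continuousWithinAt)
    (fun x hx => (hdiff₂ x (hsub (interior_subset hx))).differentiableWithinAt) fun x hx => ?_⟩
  rw [interior_Ici] at hx
  obtain ⟨⟨hlo, -⟩, hx0⟩ := ht x ((le_max_right x₀ t).trans hx.le)
  have hratio : 0 < deriv (deriv f) x / deriv f x :=
    (mul_pos hc₁ (Real.rpow_pos_of_pos hx0 _)).trans_le hlo
  exact ((div_pos_iff_of_pos_right (hpos x (hsub (Ioi_subset_Ici_self hx)))).1 hratio).le

theorem exists_log_bounds (hf : GrowthCondition f lam x₀) (hlam : lam < 1) :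
    ∃ A B, 0 < A ∧ A ≤ B ∧ ∀ᶠ x in atTop, A * x ^ (1 - lam) ≤ Real.log (f x) ∧
      Real.log (f x) ≤ B * x ^ (1 - lam) := by
  have hs : 0 < 1 - lam := sub_pos.2 hlam
  obtain ⟨A, B, hA, hlog⟩ := hf.exists_log_deriv_bounds hlam
  obtain ⟨a, ha, hmono⟩ := hf.exists_monotoneOn_deriv
  obtain ⟨hdiff, -, -, htop, hpos, -⟩ := hf
  have hsub : Ici a ⊆ Ici x₀ := Ici_subset_Ici.2 ha
  obtain ⟨A', hA', hlo⟩ := exists_mul_rpow_le_log_of_log_deriv hA (fun x hx => hdiff x (hsub hx))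
    (fun x hx => hpos x (hsub hx)) hmono htop (hlog.mono fun _ h => h.1)
  obtain ⟨B', hhi⟩ := exists_log_le_mul_rpow_of_log_deriv hs (fun x hx => hdiff x (hsub hx))
    (fun x hx => hpos x (hsub hx)) hmono htop (hlog.mono fun _ h => h.2)
  refine ⟨A', max A' B', hA', le_max_left _ _, ?_⟩
  filter_upwards [hlo, hhi, eventually_ge_atTop 0] with x hxlo hxhi hx
  exact ⟨hxlo, hxhi.trans (mul_le_mul_of_nonneg_right (le_max_right _ _) (Real.rpow_nonneg hx _))⟩

end GrowthCondition

/-- If `f` satisfies the growth condition with exponent `lam ∈ (0,1)`, then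
`f⁻¹(x) ≍ (ln x)^(1/(1-lam))` as `x → ∞`. -/
theorem inv_asymp_log_rpow (f g : ℝ → ℝ) (lam x₀ : ℝ)
    (hlam : lam ∈ Set.Ioo (0 : ℝ) 1)
    (hf : GrowthCondition f lam x₀)
    (hg : IsInverseOn f g x₀) :
    ∃ C₁ C₂ : ℝ, 0 < C₁ ∧ C₁ ≤ C₂ ∧
      ∀ᶠ x in atTop,
        C₁ * Real.log x ^ (1 / (1 - lam)) ≤ g x ∧
        g x ≤ C₂ * Real.log x ^ (1 / (1 - lam)) := by
  have hs : 0 < 1 - lam := sub_pos.2 hlam.2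
  obtain ⟨A, B, hA, hAB, hlog⟩ := hf.exists_log_bounds hlam.2
  obtain ⟨hdiff, -, -, htop, -⟩ := hf
  have hg_top : Tendsto g atTop atTop :=
    tendsto_atTop_of_leftInvOn (fun x hx => (hdiff x hx).continuousAt.continuousWithinAt)
      htop fun x hx => hg.1 x hx
  have hfg : ∀ᶠ y in atTop, f (g y) = y := (eventually_ge_atTop (f x₀)).mono hg.2
  have hB : 0 < B := hA.trans_le hAB
  refine ⟨B⁻¹ ^ (1 / (1 - lam)), A⁻¹ ^ (1 / (1 - lam)), Real.rpow_pos_of_pos (inv_pos.2 hB) _,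
    Real.rpow_le_rpow (inv_pos.2 hB).le (inv_anti₀ hA hAB) (one_div_pos.2 hs).le, ?_⟩
  exact eventually_rpow_log_bounds_of_log_bounds hs hA hB hg_top hfg hlog
end

section
/- Let f satisfy the growth condition with exponent λ ∈ (0, 1). Then the derivative of the inverse function satisfies (f⁻¹)'(x) ≍ (ln x)^{λ/(1−λ)}/x as x → ∞, i.e., there exist constants 0 < C₁ ≤ C₂ such that C₁ (ln x)^{λ/(1−λ)}/x ≤ (f⁻¹)'(x) ≤ C₂ (ln x)^{λ/(1−λ)}/x for all sufficiently large x. -/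
/-!
Write `L = log f'`. The hypothesis says `L' ≍ x^(-λ)`, which integrates to `L ≍ x^(1-λ)`.
Likewise `(x^λ f')' = λ x^(λ-1) f' + x^λ f'' ≍ f'` integrates to `x^λ f' ≍ f`, so
`log f = L + λ log x + O(1) ≍ x^(1-λ)`. Both integrations rest on one comparison principle:
if `a u' ≤ v' ≤ b u'` eventually, with `a > 0` and `u → ∞`, then `v ≍ u`.
At `y = f x`, i.e. `x = f⁻¹ y`, the estimate for `log f` reads `x^(1-λ) ≍ log y`, hence
`x^λ ≍ (log y)^(λ/(1-λ))`, while `x^λ f' ≍ f` gives `(f⁻¹)'(y) = 1 / f'(x) ≍ x^λ / y`.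
-/

open Filter Set Topology

open Asymptotics

theorem exists_eventually_le_add_of_hasDerivAt_le {φ ψ φ' ψ' : ℝ → ℝ}
    (hφ : ∀ᶠ x in atTop, HasDerivAt φ (φ' x) x) (hψ : ∀ᶠ x in atTop, HasDerivAt ψ (ψ' x) x)
    (hle : ∀ᶠ x in atTop, φ' x ≤ ψ' x) : ∃ K, ∀ᶠ x in atTop, φ x ≤ ψ x + K := by
  obtain ⟨a, ha⟩ := eventually_atTop.1 (hφ.and (hψ.and hle))
  have hderiv : ∀ x ∈ Ici a, HasDerivAt (ψ - φ) (ψ' x - φ' x) x :=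
    fun x hx => (ha x hx).2.1.sub (ha x hx).1
  have hmono : MonotoneOn (ψ - φ) (Ici a) := by
    refine monotoneOn_of_deriv_nonneg (convex_Ici a)
      (fun x hx => (hderiv x hx).continuousAt.continuousWithinAt)
      (fun x hx => (hderiv x (interior_subset hx)).differentiableAt.differentiableWithinAt)
      (fun x hx => ?_)
    rw [(hderiv x (interior_subset hx)).deriv, sub_nonneg]
    exact (ha x (interior_subset hx)).2.2
  refine ⟨φ a - ψ a, (eventually_ge_atTop a).mono fun x hx => ?_⟩
  have := hmono self_mem_Ici hx hx
  simp only [Pi.sub_apply] at this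
  linarith

theorem isTheta_of_affine_bounds {α : Type*} {l : Filter α} {u v : α → ℝ} {a b A B : ℝ}
    (hu : Tendsto u l atTop) (ha : 0 < a)
    (hlow : ∀ᶠ x in l, a * u x + A ≤ v x) (hup : ∀ᶠ x in l, v x ≤ b * u x + B) :
    v =Θ[l] u := by
  have hbig : ∀ᶠ x in l, 1 ≤ u x ∧ a * u x ≤ 2 * v x ∧ v x ≤ (|b| + |B|) * u x := by
    filter_upwards [hlow, hup, hu.eventually_ge_atTop 1, hu.eventually_ge_atTop (-2 * A / a)]
      with x hlow hup h1 hA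
    rw [div_le_iff₀ ha] at hA
    refine ⟨h1, by linarith, ?_⟩
    nlinarith [le_abs_self b, le_abs_self B, abs_nonneg B]
  refine ⟨.of_bound (|b| + |B|) ?_, .of_bound (2 / a) ?_⟩ <;>
    filter_upwards [hbig] with x ⟨h1, hlow, hup⟩ <;>
    rw [Real.norm_of_nonneg (by nlinarith : 0 ≤ v x), Real.norm_of_nonneg (by linarith : 0 ≤ u x)]
  · exact hup
  · rw [div_mul_eq_mul_div, le_div_iff₀ ha]
    linarith

theorem isTheta_of_deriv_bounds {u v u' v' : ℝ → ℝ} {a b : ℝ} (hu : Tendsto u atTop atTop)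
    (hu' : ∀ᶠ x in atTop, HasDerivAt u (u' x) x) (hv' : ∀ᶠ x in atTop, HasDerivAt v (v' x) x)
    (ha : 0 < a) (hbounds : ∀ᶠ x in atTop, a * u' x ≤ v' x ∧ v' x ≤ b * u' x) :
    v =Θ[atTop] u := by
  obtain ⟨A, hA⟩ := exists_eventually_le_add_of_hasDerivAt_le
    (hu'.mono fun _ h => h.const_mul a) hv' (hbounds.mono fun _ h => h.1)
  obtain ⟨B, hB⟩ := exists_eventually_le_add_of_hasDerivAt_le
    hv' (hu'.mono fun _ h => h.const_mul b) (hbounds.mono fun _ h => h.2)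
  exact isTheta_of_affine_bounds (A := -A) (B := B) hu ha
    (hA.mono fun _ h => by linarith) hB

theorem Asymptotics.IsTheta.log {α : Type*} {l : Filter α} {f g : α → ℝ} (h : f =Θ[l] g)
    (hg : Tendsto g l atTop) : (fun x => Real.log (f x)) =Θ[l] fun x => Real.log (g x) := by
  obtain ⟨C, hC, hfg⟩ := h.1.exists_pos
  obtain ⟨c, hc, hgf⟩ := h.2.exists_pos
  have hbdd : (fun x => Real.log (f x) - Real.log (g x)) =O[l] fun _ => (1 : ℝ) := by
    refine .of_bound (|Real.log C| + |Real.log c|) ?_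
    filter_upwards [hfg.bound, hgf.bound, hg.eventually_gt_atTop 0] with x hfg hgf hg0
    rw [Real.norm_eq_abs, Real.norm_eq_abs] at hfg hgf
    have hf0 : 0 < |f x| := by
      by_contra! h0
      nlinarith [abs_nonneg (f x), abs_pos_of_pos hg0]
    have hup := Real.log_le_log hf0 hfg
    have hlow := Real.log_le_log (abs_pos_of_pos hg0) hgf
    rw [Real.log_mul hC.ne' (abs_pos_of_pos hg0).ne'] at hup
    rw [Real.log_mul hc.ne' hf0.ne'] at hlow
    simp only [Real.log_abs, norm_one, mul_one, Real.norm_eq_abs] at hup hlow ⊢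
    rw [abs_le]
    constructor <;> linarith [le_abs_self (Real.log C), le_abs_self (Real.log c),
      abs_nonneg (Real.log C), abs_nonneg (Real.log c)]
  have hsmall : (fun x => Real.log (f x) - Real.log (g x)) =o[l] fun x => Real.log (g x) :=
    hbdd.trans_isLittleO <| isLittleO_const_left.2 <| Or.inr <|
      tendsto_norm_atTop_atTop.comp (Real.tendsto_log_atTop.comp hg)
  simpa only [Pi.add_def, add_sub_cancel] using
    (isTheta_refl (fun x => Real.log (g x)) l).add_isLittleO hsmall

theorem Asymptotics.IsTheta.comp_tendsto {α β E F : Type*} [Norm E] [Norm F] {l : Filter α}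
    {l' : Filter β} {f : α → E} {g : α → F} (h : f =Θ[l] g) {k : β → α} (hk : Tendsto k l' l) :
    (f ∘ k) =Θ[l'] (g ∘ k) :=
  ⟨h.1.comp_tendsto hk, h.2.comp_tendsto hk⟩

theorem Asymptotics.IsTheta.exists_pos_bounds {α : Type*} {l : Filter α} {f g : α → ℝ}
    (h : f =Θ[l] g) (hf : 0 ≤ᶠ[l] f) (hg : 0 ≤ᶠ[l] g) :
    ∃ C₁ C₂ : ℝ, 0 < C₁ ∧ C₁ ≤ C₂ ∧ ∀ᶠ x in l, C₁ * g x ≤ f x ∧ f x ≤ C₂ * g x := by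
  obtain ⟨C, -, hfg⟩ := h.1.exists_pos
  obtain ⟨c, hc, hgf⟩ := h.2.exists_pos
  refine ⟨c⁻¹, max c⁻¹ C, inv_pos.2 hc, le_max_left _ _, ?_⟩
  filter_upwards [hfg.bound, hgf.bound, hf, hg] with x hfg hgf hf hg
  rw [Real.norm_of_nonneg hf, Real.norm_of_nonneg hg] at hfg hgf
  constructor
  · rw [inv_mul_le_iff₀ hc]
    exact hgf
  · exact hfg.trans (mul_le_mul_of_nonneg_right (le_max_right _ _) hg)

namespace IsInverseOn

variable {f g : ℝ → ℝ} {x₀ : ℝ}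

theorem mapsTo (hinv : IsInverseOn f g x₀) (hf : ContinuousOn f (Ici x₀))
    (htop : Tendsto f atTop atTop) : MapsTo g (Ici (f x₀)) (Ici x₀) := by
  intro y hy
  obtain ⟨b, hyb, hb⟩ := ((htop.eventually_ge_atTop y).and (eventually_ge_atTop x₀)).exists
  obtain ⟨x, hx, rfl⟩ := intermediate_value_Icc hb (hf.mono Icc_subset_Ici_self) ⟨hy, hyb⟩
  rw [hinv.1 x hx.1]
  exact hx.1

theorem strictMonoOn (hinv : IsInverseOn f g x₀) (hmaps : MapsTo g (Ici (f x₀)) (Ici x₀))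
    (hmono : StrictMonoOn f (Ici x₀)) : StrictMonoOn g (Ici (f x₀)) := fun y₁ hy₁ y₂ hy₂ hy =>
  (hmono.lt_iff_lt (hmaps hy₁) (hmaps hy₂)).1 (by rwa [hinv.2 y₁ hy₁, hinv.2 y₂ hy₂])

theorem tendsto_atTop (hinv : IsInverseOn f g x₀) (hmaps : MapsTo g (Ici (f x₀)) (Ici x₀))
    (hmono : StrictMonoOn f (Ici x₀)) : Tendsto g atTop atTop := by
  refine Filter.tendsto_atTop.2 fun M => (eventually_ge_atTop (f (max M x₀))).mono fun y hy => ?_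
  have hM : max M x₀ ∈ Ici x₀ := le_max_right M x₀
  have hfM : f (max M x₀) ∈ Ici (f x₀) := hmono.monotoneOn self_mem_Ici hM hM
  calc M ≤ max M x₀ := le_max_left M x₀
    _ = g (f (max M x₀)) := (hinv.1 _ hM).symm
    _ ≤ g y := (hinv.strictMonoOn hmaps hmono).monotoneOn hfM (le_trans hfM hy) hy

theorem hasDerivAt (hinv : IsInverseOn f g x₀) (hmaps : MapsTo g (Ici (f x₀)) (Ici x₀))
    (hmono : StrictMonoOn f (Ici x₀)) {y f' : ℝ} (hy : f x₀ < y) (hf : HasDerivAt f f' (g y))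
    (hf' : f' ≠ 0) : HasDerivAt g f'⁻¹ y := by
  have hgmono := hinv.strictMonoOn hmaps hmono
  have hgy : x₀ < g y := by
    simpa only [hinv.1 x₀ self_mem_Ici] using hgmono self_mem_Ici hy.le hy
  have himage : Ici x₀ ⊆ g '' Ici (f x₀) := fun x hx =>
    ⟨f x, hmono.monotoneOn self_mem_Ici hx hx, hinv.1 x hx⟩
  have hcont : ContinuousAt g y := hgmono.continuousAt_of_image_mem_nhds (Ici_mem_nhds hy)
    (mem_of_superset (Ici_mem_nhds hgy) himage)
  exact hf.of_local_left_inverse hcont hf' <|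
    (eventually_ge_nhds hy).mono fun z hz => hinv.2 z hz

end IsInverseOn

namespace GrowthCondition

variable {f : ℝ → ℝ} {lam x₀ : ℝ}

theorem isTheta_log_deriv (hf : GrowthCondition f lam x₀) (hlam : lam < 1) :
    (fun x => Real.log (deriv f x)) =Θ[atTop] fun x => x ^ (1 - lam) := by
  obtain ⟨-, hdiff2, -, -, hpos, c₁, c₂, hc₁, -, hbounds⟩ := hf
  have hμ : 0 < 1 - lam := sub_pos.2 hlam
  have hcancel : ∀ c x : ℝ, c / (1 - lam) * ((1 - lam) * x ^ (-lam)) = c * x ^ (-lam) :=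
    fun c x => by field_simp
  refine isTheta_of_deriv_bounds (u' := fun x => (1 - lam) * x ^ (-lam))
    (v' := fun x => deriv (deriv f) x / deriv f x)
    (a := c₁ / (1 - lam)) (b := c₂ / (1 - lam)) (tendsto_rpow_atTop hμ) ?_ ?_ (div_pos hc₁ hμ) ?_
  · filter_upwards [eventually_gt_atTop 0] with x hx
    simpa only [sub_sub_cancel_left] using
      Real.hasDerivAt_rpow_const (p := 1 - lam) (Or.inl hx.ne')
  · filter_upwards [eventually_ge_atTop x₀] with x hx
    exact (hdiff2 x hx).hasDerivAt.log (hpos x hx).ne'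
  · simpa only [hcancel] using hbounds

theorem isTheta_rpow_mul_deriv (hf : GrowthCondition f lam x₀) (hlam0 : 0 ≤ lam)
    (hlam1 : lam ≤ 1) : (fun x => x ^ lam * deriv f x) =Θ[atTop] f := by
  obtain ⟨hdiff, hdiff2, -, htop, hpos, c₁, c₂, hc₁, -, hbounds⟩ := hf
  refine isTheta_of_deriv_bounds
    (u' := deriv f)
    (v' := fun x => lam * x ^ (lam - 1) * deriv f x + x ^ lam * deriv (deriv f) x)
    (a := c₁) (b := c₂ + lam) htop ?_ ?_ hc₁ ?_
  · filter_upwards [eventually_ge_atTop x₀] with x hx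
    exact (hdiff x hx).hasDerivAt
  · filter_upwards [eventually_gt_atTop 0, eventually_ge_atTop x₀] with x hx0 hx
    exact (Real.hasDerivAt_rpow_const (Or.inl hx0.ne')).mul (hdiff2 x hx).hasDerivAt
  · filter_upwards [hbounds, eventually_ge_atTop 1, eventually_ge_atTop x₀]
      with x ⟨hlow, hup⟩ hx1 hx
    have hD := hpos x hx
    have hx0 : 0 < x := by linarith
    have hxlam : 0 ≤ x ^ lam := Real.rpow_nonneg hx0.le _
    have hcancel : x ^ lam * x ^ (-lam) = 1 := by rw [← Real.rpow_add hx0]; simp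
    have hpow : x ^ (lam - 1) ≤ 1 := Real.rpow_le_one_of_one_le_of_nonpos hx1 (by linarith)
    rw [le_div_iff₀ hD] at hlow
    rw [div_le_iff₀ hD] at hup
    have hlow' : c₁ * deriv f x ≤ x ^ lam * deriv (deriv f) x :=
      calc c₁ * deriv f x = x ^ lam * (c₁ * x ^ (-lam) * deriv f x) := by
            linear_combination (-(c₁ * deriv f x)) * hcancel
        _ ≤ x ^ lam * deriv (deriv f) x := mul_le_mul_of_nonneg_left hlow hxlam
    have hup' : x ^ lam * deriv (deriv f) x ≤ c₂ * deriv f x :=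
      calc x ^ lam * deriv (deriv f) x ≤ x ^ lam * (c₂ * x ^ (-lam) * deriv f x) :=
            mul_le_mul_of_nonneg_left hup hxlam
        _ = c₂ * deriv f x := by linear_combination (c₂ * deriv f x) * hcancel
    have hfirst : 0 ≤ lam * x ^ (lam - 1) * deriv f x := by positivity
    have hfirst' : lam * x ^ (lam - 1) * deriv f x ≤ lam * deriv f x :=
      mul_le_mul_of_nonneg_right (mul_le_of_le_one_right hlam0 hpow) hD.le
    constructor <;> linarith

theorem isTheta_log (hf : GrowthCondition f lam x₀) (hlam0 : 0 ≤ lam) (hlam1 : lam < 1) :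
    (fun x => Real.log (f x)) =Θ[atTop] fun x => x ^ (1 - lam) := by
  have htop : Tendsto f atTop atTop := hf.2.2.2.1
  have hpos : ∀ x ∈ Ici x₀, 0 < deriv f x := hf.2.2.2.2.1
  have hlog_mul : (fun x => Real.log (x ^ lam * deriv f x)) =ᶠ[atTop]
      (fun x => Real.log (deriv f x)) + fun x => lam * Real.log x := by
    filter_upwards [eventually_gt_atTop 0, eventually_ge_atTop x₀] with x hx0 hx
    rw [Real.log_mul (Real.rpow_pos_of_pos hx0 _).ne' (hpos x hx).ne',
      Real.log_rpow hx0, Pi.add_apply, add_comm]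
  have hlog_small : (fun x => lam * Real.log x) =o[atTop] fun x => x ^ (1 - lam) :=
    (isLittleO_log_rpow_atTop (sub_pos.2 hlam1)).const_mul_left lam
  exact ((hf.isTheta_rpow_mul_deriv hlam0 hlam1.le).log htop).symm.trans <|
    hlog_mul.trans_isTheta <| (hf.isTheta_log_deriv hlam1).add_isLittleO hlog_small

variable {g : ℝ → ℝ}

theorem mapsTo_inverse (hf : GrowthCondition f lam x₀) (hg : IsInverseOn f g x₀) :
    MapsTo g (Ici (f x₀)) (Ici x₀) :=
  hg.mapsTo (fun x hx => (hf.1 x hx).continuousAt.continuousWithinAt) hf.2.2.2.1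

theorem tendsto_inverse (hf : GrowthCondition f lam x₀) (hg : IsInverseOn f g x₀) :
    Tendsto g atTop atTop :=
  hg.tendsto_atTop (hf.mapsTo_inverse hg) hf.2.2.1

theorem eventually_hasDerivAt_inverse (hf : GrowthCondition f lam x₀) (hg : IsInverseOn f g x₀) :
    ∀ᶠ y in atTop, HasDerivAt g (deriv f (g y))⁻¹ y := by
  have hmaps := hf.mapsTo_inverse hg
  obtain ⟨hdiff, -, hmono, -, hpos, -⟩ := hf
  filter_upwards [eventually_gt_atTop (f x₀)] with y hy
  exact hg.hasDerivAt hmaps hmono hy (hdiff _ (hmaps hy.le)).hasDerivAt (hpos _ (hmaps hy.le)).ne'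

theorem isTheta_deriv_inverse (hf : GrowthCondition f lam x₀) (hg : IsInverseOn f g x₀)
    (hlam0 : 0 ≤ lam) (hlam1 : lam < 1) :
    deriv g =Θ[atTop] fun y => Real.log y ^ (lam / (1 - lam)) / y := by
  have hgtop := hf.tendsto_inverse hg
  have hfg : ∀ᶠ y in atTop, f (g y) = y := (eventually_ge_atTop (f x₀)).mono hg.2
  have hpow : (fun y => g y ^ (1 - lam)) =Θ[atTop] Real.log :=
    ((hf.isTheta_log hlam0 hlam1).comp_tendsto hgtop).symm.trans_eventuallyEq
      (hfg.mono fun y hy => by simp only [Function.comp_apply, hy])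
  have hnum : (fun y => g y ^ lam) =Θ[atTop] fun y => Real.log y ^ (lam / (1 - lam)) := by
    refine EventuallyEq.trans_isTheta ?_ (hpow.rpow ?_ ?_)
    · filter_upwards [hgtop.eventually_ge_atTop 0] with y hy
      rw [← Real.rpow_mul hy, mul_div_cancel₀ _ (sub_pos.2 hlam1).ne']
    · filter_upwards [hgtop.eventually_ge_atTop 0] with y hy
      exact Real.rpow_nonneg hy _
    · filter_upwards [eventually_ge_atTop 1] with y hy
      exact Real.log_nonneg hy
  have hden : (fun y => g y ^ lam * deriv f (g y)) =Θ[atTop] fun y => y :=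
    ((hf.isTheta_rpow_mul_deriv hlam0 hlam1.le).comp_tendsto hgtop).trans_eventuallyEq hfg
  refine EventuallyEq.trans_isTheta ?_ (hnum.div hden)
  filter_upwards [hf.eventually_hasDerivAt_inverse hg, hgtop.eventually_gt_atTop 0]
    with y hy hgy
  rw [hy.deriv, div_mul_cancel_left₀ (Real.rpow_pos_of_pos hgy lam).ne']

end GrowthCondition

/-- If `f` satisfies the growth condition with exponent `lam ∈ (0,1)`, then
`(f⁻¹)'(x) ≍ (ln x)^(lam/(1-lam)) / x` as `x → ∞`. -/
theorem deriv_inv_asymp (f g : ℝ → ℝ) (lam x₀ : ℝ)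
    (hlam : lam ∈ Set.Ioo (0 : ℝ) 1)
    (hf : GrowthCondition f lam x₀)
    (hg : IsInverseOn f g x₀) :
    ∃ C₁ C₂ : ℝ, 0 < C₁ ∧ C₁ ≤ C₂ ∧
      ∀ᶠ x in atTop,
        C₁ * (Real.log x ^ (lam / (1 - lam)) / x) ≤ deriv g x ∧
        deriv g x ≤ C₂ * (Real.log x ^ (lam / (1 - lam)) / x) := by
  have hpos : ∀ x ∈ Ici x₀, 0 < deriv f x := hf.2.2.2.2.1
  refine (hf.isTheta_deriv_inverse hg hlam.1.le hlam.2).exists_pos_bounds ?_ ?_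
  · filter_upwards [hf.eventually_hasDerivAt_inverse hg,
      (hf.tendsto_inverse hg).eventually_ge_atTop x₀] with y hy hgy
    rw [hy.deriv]
    exact inv_nonneg.2 (hpos _ hgy).le
  · filter_upwards [eventually_ge_atTop 1] with y hy
    exact div_nonneg (Real.rpow_nonneg (Real.log_nonneg hy) _) (by linarith)
end

section
/- Let f satisfy the growth condition with exponent λ ∈ (0, 1]. Let τ(ε) and Δ(ε) be functions of ε > 0 with τ(ε) → ∞, Δ(ε) ≥ 0, and Δ(ε)·τ(ε)^{−λ} → 0 as ε → 0⁺. Then, as ε → 0⁺, uniformly over ω ∈ [0, 2], f(τ(ε) + ω·Δ(ε)) ~ f(τ(ε)) and f'(τ(ε) + ω·Δ(ε)) ~ f'(τ(ε)); that is, sup_{ω∈[0,2]} |f(τ(ε)+ωΔ(ε))/f(τ(ε)) − 1| → 0 and sup_{ω∈[0,2]} |f'(τ(ε)+ωΔ(ε))/f'(τ(ε)) − 1| → 0. -/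
/-! The bound `f'' ≤ c x^(-λ) f'` and Grönwall's inequality give
`f'(t) ≤ f'(t + s) ≤ f'(t) exp (c s t^(-λ))` for large `t` and `s ≥ 0`. Since `λ ≤ 1`, the
function `f' x^λ - (c + 1) f` is eventually decreasing, so `f' ≤ C f x^(-λ)`, and the mean value
theorem turns the bound on `f'` into `f(t) ≤ f(t + s) ≤ f(t) (1 + C v exp (c v))` with
`v = s t^(-λ)`. For `s = ωΔ` and `ω ∈ [0, 2]` we have `v ≤ 2 Δ τ^(-λ) → 0`, so both ratios tend
to `1` uniformly in `ω`. -/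

open Filter Set Topology

open Real

def WindowRatioBound (g : ℝ → ℝ) (lam : ℝ) (ψ : ℝ → ℝ) : Prop :=
  ∀ᶠ t in atTop, 0 < g t ∧
    ∀ s, 0 ≤ s → g t ≤ g (t + s) ∧ g (t + s) ≤ g t * ψ (s * t ^ (-lam))

theorem WindowRatioBound.eventually_abs_div_sub_one_lt {g ψ τ Δ : ℝ → ℝ} {lam : ℝ}
    (hg : WindowRatioBound g lam ψ) (hψ : ContinuousAt ψ 0) (hψ0 : ψ 0 = 1)
    (hψmono : MonotoneOn ψ (Ici 0)) (hτ : Tendsto τ (𝓝[>] 0) atTop)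
    (hΔ : ∀ ε, 0 < ε → 0 ≤ Δ ε) (hΔτ : Tendsto (fun ε => Δ ε * τ ε ^ (-lam)) (𝓝[>] 0) (𝓝 0))
    {δ : ℝ} (hδ : 0 < δ) :
    ∀ᶠ ε in 𝓝[>] (0 : ℝ), ∀ ω ∈ Icc (0 : ℝ) 2, |g (τ ε + ω * Δ ε) / g (τ ε) - 1| < δ := by
  have hψlim : Tendsto (fun ε => ψ (2 * (Δ ε * τ ε ^ (-lam)))) (𝓝[>] 0) (𝓝 1) := by
    rw [← hψ0]
    exact hψ.tendsto.comp (by simpa using hΔτ.const_mul 2)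
  filter_upwards [hψlim.eventually_lt_const (lt_add_of_pos_right 1 hδ), hτ.eventually hg,
    hτ.eventually_ge_atTop 0, self_mem_nhdsWithin] with ε hψε ⟨hgpos, hgε⟩ hτ0 hε ω ⟨hω0, hω2⟩
  have hΔε := hΔ ε hε
  have hs : 0 ≤ ω * Δ ε := mul_nonneg hω0 hΔε
  have hpow : 0 ≤ τ ε ^ (-lam) := rpow_nonneg hτ0 _
  obtain ⟨hlow, hup⟩ := hgε _ hs
  have hwindow : ψ (ω * Δ ε * τ ε ^ (-lam)) ≤ ψ (2 * (Δ ε * τ ε ^ (-lam))) :=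
    hψmono (mul_nonneg hs hpow) (by simp only [mem_Ici]; positivity)
      (by rw [← mul_assoc]; gcongr)
  rw [abs_of_nonneg (sub_nonneg.2 ((one_le_div hgpos).2 hlow)), sub_lt_iff_lt_add']
  exact ((div_le_iff₀' hgpos).2 hup).trans_lt (hwindow.trans_lt hψε)

namespace GrowthCondition

variable {f : ℝ → ℝ} {lam x₀ : ℝ}

theorem exists_ray (hf : GrowthCondition f lam x₀) : ∃ c, 0 ≤ c ∧ ∃ A, 1 ≤ A ∧ ∀ x, A ≤ x →
    HasDerivAt f (deriv f x) x ∧ HasDerivAt (deriv f) (deriv (deriv f) x) x ∧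
    0 < deriv f x ∧ 0 ≤ deriv (deriv f) x ∧ deriv (deriv f) x ≤ c * x ^ (-lam) * deriv f x := by
  obtain ⟨hd1, hd2, -, -, hpos, c₁, c₂, hc₁, hc₁₂, hbound⟩ := hf
  obtain ⟨X, hX⟩ := eventually_atTop.1 hbound
  refine ⟨c₂, hc₁.le.trans hc₁₂, max (max x₀ X) 1, le_max_right _ _, fun x hx => ?_⟩
  simp only [max_le_iff] at hx
  obtain ⟨⟨hx₀, hxX⟩, hx1⟩ := hx
  have hf'x := hpos x hx₀
  obtain ⟨hlow, hup⟩ := hX x hxX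
  rw [le_div_iff₀ hf'x] at hlow
  rw [div_le_iff₀ hf'x] at hup
  have : 0 ≤ c₁ * x ^ (-lam) * deriv f x := by positivity
  exact ⟨(hd1 x hx₀).hasDerivAt, (hd2 x hx₀).hasDerivAt, hf'x, this.trans hlow, hup⟩

theorem windowRatioBound_deriv (hlam : 0 < lam) (hf : GrowthCondition f lam x₀) :
    ∃ c, 0 ≤ c ∧ WindowRatioBound (deriv f) lam (fun v => exp (c * v)) := by
  obtain ⟨c, hc, A, hA, hray⟩ := hf.exists_ray
  refine ⟨c, hc, eventually_atTop.2 ⟨A, fun t ht => ⟨(hray t ht).2.2.1, fun s hs => ?_⟩⟩⟩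
  have hray' : ∀ x ∈ Icc t (t + s), A ≤ x := fun x hx => ht.trans hx.1
  have hcont : ContinuousOn (deriv f) (Icc t (t + s)) := fun x hx =>
    (hray x (hray' x hx)).2.1.continuousAt.continuousWithinAt
  constructor
  · refine monotoneOn_of_hasDerivWithinAt_nonneg (convex_Icc _ _) hcont
      (fun x hx => (hray x (hray' x (interior_subset hx))).2.1.hasDerivWithinAt)
      (fun x hx => (hray x (hray' x (interior_subset hx))).2.2.2.1) (left_mem_Icc.2 (by linarith))
      ⟨by linarith, le_rfl⟩ (by linarith)
  · have hgron := norm_le_gronwallBound_of_norm_deriv_right_le (δ := deriv f t)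
      (K := c * t ^ (-lam)) (ε := 0) hcont
      (fun x hx => (hray x (hray' x (Ico_subset_Icc_self hx))).2.1.hasDerivWithinAt)
      (Real.norm_of_nonneg (hray t ht).2.2.1.le).le
      (fun x hx => by
        obtain ⟨-, -, hpos, hnonneg, hle⟩ := hray x (hray' x (Ico_subset_Icc_self hx))
        have hxpow : x ^ (-lam) ≤ t ^ (-lam) :=
          rpow_le_rpow_of_nonpos (by linarith) hx.1 (by linarith)
        rw [Real.norm_of_nonneg hnonneg, Real.norm_of_nonneg hpos.le, add_zero]
        exact hle.trans (by gcongr))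
      (t + s) ⟨by linarith, le_rfl⟩
    rwa [gronwallBound_ε0, add_sub_cancel_left, Real.norm_of_nonneg
      (hray _ (by linarith)).2.2.1.le, mul_assoc, mul_comm _ s] at hgron

theorem eventually_deriv_mul_rpow_le (hlam : lam ∈ Ioc 0 1) (hf : GrowthCondition f lam x₀) :
    ∃ C, 0 ≤ C ∧ ∀ᶠ x in atTop, deriv f x * x ^ lam ≤ C * f x := by
  obtain ⟨c, hc, A, hA, hray⟩ := hf.exists_ray
  set h : ℝ → ℝ := fun x => deriv f x * x ^ lam - (c + 1) * f x
  have hderiv : ∀ x, A ≤ x → HasDerivAt h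
      (deriv (deriv f) x * x ^ lam + deriv f x * (lam * x ^ (lam - 1)) - (c + 1) * deriv f x) x :=
    fun x hx => ((hray x hx).2.1.mul (hasDerivAt_rpow_const (Or.inl (by linarith)))).sub
      ((hray x hx).1.const_mul (c + 1))
  -- `h' ≤ 0` because `f'' x ^ λ ≤ c f'` and `λ x ^ (λ - 1) ≤ 1` on `[1, ∞)`.
  have hanti : AntitoneOn h (Ici A) := by
    refine antitoneOn_of_hasDerivWithinAt_nonpos (convex_Ici A)
      (fun x hx => (hderiv x hx).continuousAt.continuousWithinAt)
      (fun x hx => (hderiv x (interior_subset hx)).hasDerivWithinAt) fun x hx => ?_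
    rw [interior_Ici, mem_Ioi] at hx
    obtain ⟨-, -, hpos, -, hle⟩ := hray x hx.le
    have hx0 : 0 < x := by linarith
    have hsecond : deriv (deriv f) x * x ^ lam ≤ c * deriv f x := by
      calc deriv (deriv f) x * x ^ lam ≤ c * x ^ (-lam) * deriv f x * x ^ lam := by gcongr
        _ = c * deriv f x := by
          rw [mul_right_comm, mul_assoc c, ← rpow_add hx0, neg_add_cancel, rpow_zero, mul_one]
    have hpow : lam * x ^ (lam - 1) ≤ 1 :=
      mul_le_one₀ hlam.2 (by positivity)
        (rpow_le_one_of_one_le_of_nonpos (by linarith) (by linarith [hlam.2]))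
    nlinarith
  refine ⟨c + 2, by linarith, ?_⟩
  filter_upwards [eventually_ge_atTop A, hf.2.2.2.1.eventually_ge_atTop (h A)] with x hxA hfx
  have := hanti self_mem_Ici hxA hxA
  simp only [h] at this hfx
  linarith

theorem windowRatioBound (hlam : lam ∈ Ioc 0 1) (hf : GrowthCondition f lam x₀) :
    ∃ C c, 0 ≤ C ∧ 0 ≤ c ∧ WindowRatioBound f lam (fun v => 1 + C * v * exp (c * v)) := by
  obtain ⟨c, hc, hderiv⟩ := hf.windowRatioBound_deriv hlam.1
  obtain ⟨C, hC, hCbound⟩ := hf.eventually_deriv_mul_rpow_le hlam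
  obtain ⟨_, _, A, _, hray⟩ := hf.exists_ray
  refine ⟨C, c, hC, hc, ?_⟩
  filter_upwards [hderiv, hCbound, eventually_ge_atTop A, eventually_gt_atTop 0,
    hf.2.2.2.1.eventually_gt_atTop 0] with t ⟨hf't, hratio⟩ hCt htA ht0 hft
  refine ⟨hft, fun s hs => ?_⟩
  have hcont : ContinuousOn f (Icc t (t + s)) := fun x hx =>
    (hray x (htA.trans hx.1)).1.continuousAt.continuousWithinAt
  have hdiff : DifferentiableOn ℝ f (interior (Icc t (t + s))) := fun x hx =>
    (hray x (htA.trans (interior_subset hx).1)).1.differentiableAt.differentiableWithinAt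
  have hderiv_mem : ∀ x ∈ interior (Icc t (t + s)),
      0 ≤ deriv f x ∧ deriv f x ≤ deriv f t * exp (c * (s * t ^ (-lam))) := by
    intro x hx
    rw [interior_Icc] at hx
    obtain ⟨hlow, hup⟩ := hratio (x - t) (by linarith [hx.1])
    rw [add_sub_cancel] at hlow hup
    refine ⟨hf't.le.trans hlow, hup.trans ?_⟩
    gcongr
    linarith [hx.2]
  have hmvt_low := (convex_Icc t (t + s)).mul_sub_le_image_sub_of_le_deriv hcont hdiff
    (fun x hx => (hderiv_mem x hx).1) t (left_mem_Icc.2 (by linarith))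
    (t + s) (right_mem_Icc.2 (by linarith)) (by linarith)
  have hmvt_up := (convex_Icc t (t + s)).image_sub_le_mul_sub_of_deriv_le hcont hdiff
    (fun x hx => (hderiv_mem x hx).2) t (left_mem_Icc.2 (by linarith))
    (t + s) (right_mem_Icc.2 (by linarith)) (by linarith)
  have hf't_le : deriv f t ≤ C * f t * t ^ (-lam) := by
    calc deriv f t = deriv f t * t ^ lam * t ^ (-lam) := by
          rw [mul_assoc, ← rpow_add ht0, add_neg_cancel, rpow_zero, mul_one]
      _ ≤ C * f t * t ^ (-lam) := by gcongr
  constructor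
  · linarith
  · calc f (t + s) ≤ f t + deriv f t * exp (c * (s * t ^ (-lam))) * s := by linarith
      _ ≤ f t + C * f t * t ^ (-lam) * exp (c * (s * t ^ (-lam))) * s := by gcongr
      _ = f t * (1 + C * (s * t ^ (-lam)) * exp (c * (s * t ^ (-lam)))) := by ring

end GrowthCondition

/-- If `f` satisfies the growth condition with exponent `lam ∈ (0,1]`, `τ(ε) → ∞`,
`Δ(ε) ≥ 0` and `Δ(ε)·τ(ε)^(-lam) → 0` as `ε → 0⁺`, then uniformly over `ω ∈ [0,2]`
we have `f(τ(ε)+ωΔ(ε)) ~ f(τ(ε))` and `f'(τ(ε)+ωΔ(ε)) ~ f'(τ(ε))`. -/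
theorem uniform_equiv_on_window (f : ℝ → ℝ) (lam x₀ : ℝ) (τ Δ : ℝ → ℝ)
    (hlam : lam ∈ Set.Ioc (0 : ℝ) 1)
    (hf : GrowthCondition f lam x₀)
    (hτ : Tendsto τ (𝓝[>] (0 : ℝ)) atTop)
    (hΔ : ∀ ε : ℝ, 0 < ε → 0 ≤ Δ ε)
    (hΔτ : Tendsto (fun ε => Δ ε * τ ε ^ (-lam)) (𝓝[>] (0 : ℝ)) (𝓝 0)) :
    ∀ δ > (0 : ℝ), ∀ᶠ ε in 𝓝[>] (0 : ℝ), ∀ ω ∈ Set.Icc (0 : ℝ) 2,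
      |f (τ ε + ω * Δ ε) / f (τ ε) - 1| < δ ∧
      |deriv f (τ ε + ω * Δ ε) / deriv f (τ ε) - 1| < δ := by
  intro δ hδ
  obtain ⟨c, hc, hderiv⟩ := hf.windowRatioBound_deriv hlam.1
  obtain ⟨C, c', hC, hc', hfun⟩ := hf.windowRatioBound hlam
  have hexp_mono : MonotoneOn (fun v => exp (c * v)) (Ici 0) := fun a _ b _ hab => by
    dsimp only; gcongr
  have hfun_mono : MonotoneOn (fun v => 1 + C * v * exp (c' * v)) (Ici 0) :=
    fun a ha b hb hab => by rw [mem_Ici] at ha hb; dsimp only; gcongr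
  filter_upwards [hfun.eventually_abs_div_sub_one_lt (by fun_prop) (by simp) hfun_mono
      hτ hΔ hΔτ hδ, hderiv.eventually_abs_div_sub_one_lt (by fun_prop) (by simp) hexp_mono
      hτ hΔ hΔτ hδ] with ε hfε hderivε ω hω
  exact ⟨hfε ω hω, hderivε ω hω⟩
end

section
/- Let f satisfy the growth condition with exponent λ ∈ (0, 1]. Fix real numbers α ≠ 0 and β. Let γ(ε) and τ₀(ε) be positive functions with γ(ε) → ∞ and τ₀(ε) → ∞ as ε → 0⁺, satisfying f(τ₀(ε))·ε = γ(ε) + o(1/γ(ε)). Let R̃(ε) be any function with R̃(ε) = o(ln γ(ε)), and define Δ(ε) := [ (2/α + β − 2)·ln γ(ε)/γ(ε) + R̃(ε)/γ(ε) ] / (f'(τ₀(ε))·ε). Then for every function η(ε) with η(ε) = o(1/(f'(τ₀(ε))·ε·γ(ε))), one has, as ε → 0⁺, f(τ₀(ε) + Δ(ε) + η(ε))·ε = γ(ε) + (2/α + β − 2)·ln γ(ε)/γ(ε) + R̃(ε)/γ(ε) + o(1/γ(ε)). -/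
open Filter Set Topology

/-!
With `s = Δ + η` and `f'(τ₀) ε Δ = A := (2/α + β - 2) ln γ / γ + R̃ / γ`, the error is
`(f(τ₀)ε - γ) + ε (f(τ₀ + s) - f(τ₀) - f'(τ₀) s) + f'(τ₀) ε η`, whose outer terms are `o(1/γ)` by
hypothesis. For the Taylor remainder, the upper bound `f''/f' ≤ c₂ x^(-λ)` makes `log f'` vary by
`O(τ₀^(-λ) |s|)` on `[τ₀, τ₀ + s]`, so the remainder is `O(τ₀^(-λ) f'(τ₀) s²)`. The lower bound
`f''/f' ≥ c₁ x^(-λ)` makes `f - x^λ f' / c₁` decreasing, so `f(x) = O(x^λ f'(x))` and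
`γ ≈ f(τ₀) ε = O(τ₀^λ f'(τ₀) ε)`. Hence `ε γ` times the remainder is `O((f'(τ₀) ε s)²)`, and
`f'(τ₀) ε s = A + o(1/γ) → 0`.
-/

open Real

lemma GrowthCondition.exists_bounds_on_Ici {f : ℝ → ℝ} {lam x₀ : ℝ}
    (hf : GrowthCondition f lam x₀) :
    ∃ X c₁ c₂, 0 < X ∧ 0 < c₁ ∧ c₁ ≤ c₂ ∧ ∀ x ∈ Ici X,
      DifferentiableAt ℝ f x ∧ DifferentiableAt ℝ (deriv f) x ∧ 0 < deriv f x ∧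
      c₁ * x ^ (-lam) ≤ logDeriv (deriv f) x ∧ logDeriv (deriv f) x ≤ c₂ * x ^ (-lam) := by
  obtain ⟨hfd, hfd', -, -, hpos, c₁, c₂, hc₁, hc₁₂, hbounds⟩ := hf
  obtain ⟨X₀, hX₀⟩ := eventually_atTop.1 hbounds
  refine ⟨max X₀ (max x₀ 1), c₁, c₂, by positivity, hc₁, hc₁₂, fun x hx => ?_⟩
  have hx : X₀ ≤ x ∧ x₀ ≤ x :=
    ⟨le_of_max_le_left hx, (le_max_left _ _).trans (le_of_max_le_right hx)⟩
  simpa only [logDeriv_apply] using ⟨hfd x hx.2, hfd' x hx.2, hpos x hx.2, hX₀ x hx.1⟩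

lemma antitoneOn_sub_inv_mul_rpow_mul_deriv {f : ℝ → ℝ} {lam c X : ℝ} (hX : 0 < X)
    (hlam : 0 ≤ lam) (hc : 0 < c)
    (hf : ∀ x ∈ Ici X, DifferentiableAt ℝ f x ∧ DifferentiableAt ℝ (deriv f) x ∧
      0 < deriv f x ∧ c * x ^ (-lam) ≤ logDeriv (deriv f) x) :
    AntitoneOn (fun x => f x - c⁻¹ * (x ^ lam * deriv f x)) (Ici X) := by
  have hderiv : ∀ x ∈ Ici X, HasDerivAt (fun x => f x - c⁻¹ * (x ^ lam * deriv f x))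
      (deriv f x - c⁻¹ * (lam * x ^ (lam - 1) * deriv f x + x ^ lam * deriv (deriv f) x)) x :=
    fun x hx => (hf x hx).1.hasDerivAt.sub
      (((hasDerivAt_rpow_const (Or.inl (hX.trans_le hx).ne')).mul
        (hf x hx).2.1.hasDerivAt).const_mul _)
  refine antitoneOn_of_hasDerivWithinAt_nonpos (convex_Ici X)
    (fun x hx => (hderiv x hx).continuousAt.continuousWithinAt)
    (fun x hx => (hderiv x (interior_subset hx)).hasDerivWithinAt) fun x hx => ?_
  obtain ⟨-, -, hpos, hlow⟩ := hf x (interior_subset hx)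
  have hx : 0 < x := hX.trans_le (interior_subset hx)
  have hkey : c * deriv f x ≤ x ^ lam * deriv (deriv f) x := by
    rw [logDeriv_apply, le_div_iff₀ hpos, rpow_neg hx.le] at hlow
    have hxlam : 0 < x ^ lam := rpow_pos_of_pos hx lam
    calc c * deriv f x = x ^ lam * (c * (x ^ lam)⁻¹ * deriv f x) := by field_simp
      _ ≤ x ^ lam * deriv (deriv f) x := by gcongr
  have hmain : deriv f x ≤ c⁻¹ * (x ^ lam * deriv (deriv f) x) := by
    rwa [← div_eq_inv_mul, le_div_iff₀' hc]
  have : 0 ≤ c⁻¹ * (lam * x ^ (lam - 1) * deriv f x) := by positivity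
  linarith

lemma GrowthCondition.exists_eventually_le_mul_rpow_mul_deriv {f : ℝ → ℝ} {lam x₀ : ℝ}
    (hf : GrowthCondition f lam x₀) (hlam : 0 ≤ lam) :
    ∃ K, ∀ᶠ x in atTop, f x ≤ K * (x ^ lam * deriv f x) := by
  obtain ⟨X, c₁, _, hX, hc₁, -, hbounds⟩ := hf.exists_bounds_on_Ici
  have hanti := antitoneOn_sub_inv_mul_rpow_mul_deriv hX hlam hc₁ fun x hx =>
    let ⟨hd, hd', hpos, hlow, _⟩ := hbounds x hx
    ⟨hd, hd', hpos, hlow⟩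
  obtain ⟨-, -, -, htop, -⟩ := hf
  set C := f X - c₁⁻¹ * (X ^ lam * deriv f X)
  refine ⟨2 * c₁⁻¹, ?_⟩
  -- `f` eventually exceeds `2 C`, which absorbs the additive constant
  filter_upwards [eventually_ge_atTop X, htop.eventually_ge_atTop (2 * C)] with x hx hfx
  have := hanti self_mem_Ici hx hx
  dsimp only at this
  linarith

lemma abs_sub_le_of_abs_logDeriv_le {g : ℝ → ℝ} {a b M y : ℝ}
    (hg : ∀ z ∈ uIcc a b, DifferentiableAt ℝ g z) (hpos : ∀ z ∈ uIcc a b, 0 < g z)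
    (hM : ∀ z ∈ uIcc a b, |logDeriv g z| ≤ M) (hab : M * |b - a| ≤ 1) (hy : y ∈ uIcc a b) :
    |g y - g a| ≤ 2 * M * |b - a| * g a := by
  have hlog : ∀ z ∈ uIcc a b,
      HasDerivWithinAt (fun z => log (g z)) (logDeriv g z) (uIcc a b) z := fun z hz =>
    ((hg z hz).hasDerivAt.log (hpos z hz).ne').hasDerivWithinAt
  have hd : |log (g y) - log (g a)| ≤ M * |b - a| :=
    calc |log (g y) - log (g a)| ≤ M * |y - a| :=
          Convex.norm_image_sub_le_of_norm_hasDerivWithin_le hlog hM (convex_uIcc a b)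
            left_mem_uIcc hy
      _ ≤ M * |b - a| :=
          mul_le_mul_of_nonneg_left (abs_sub_left_of_mem_uIcc hy)
            ((abs_nonneg _).trans (hM a left_mem_uIcc))
  have hga := hpos a left_mem_uIcc
  calc |g y - g a| = g a * |exp (log (g y) - log (g a)) - 1| := by
        rw [exp_sub, exp_log (hpos y hy), exp_log hga, ← abs_of_pos hga, ← abs_mul,
          abs_of_pos hga]
        congr 1
        field_simp
    _ ≤ g a * (2 * (M * |b - a|)) := by
        gcongr
        exact (abs_exp_sub_one_le (hd.trans hab)).trans (by gcongr)
    _ = 2 * M * |b - a| * g a := by ring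

lemma abs_sub_sub_deriv_mul_le {f : ℝ → ℝ} {a b B : ℝ}
    (hf : ∀ y ∈ uIcc a b, DifferentiableAt ℝ f y)
    (hB : ∀ y ∈ uIcc a b, |deriv f y - deriv f a| ≤ B) :
    |f b - f a - deriv f a * (b - a)| ≤ B * |b - a| := by
  have hderiv : ∀ y ∈ uIcc a b, HasDerivWithinAt (fun z => f z - deriv f a * z)
      (deriv f y - deriv f a) (uIcc a b) y := fun y hy => by
    have : HasDerivAt (fun z => f z - deriv f a * z) (deriv f y - deriv f a * 1) y :=
      (hf y hy).hasDerivAt.sub ((hasDerivAt_id' y).const_mul _)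
    simpa only [mul_one] using this.hasDerivWithinAt
  have := Convex.norm_image_sub_le_of_norm_hasDerivWithin_le hderiv hB (convex_uIcc a b)
    left_mem_uIcc right_mem_uIcc
  rw [Real.norm_eq_abs, Real.norm_eq_abs] at this
  convert this using 2
  ring

lemma GrowthCondition.exists_eventually_abs_sub_sub_deriv_mul_le {f : ℝ → ℝ} {lam x₀ : ℝ}
    (hf : GrowthCondition f lam x₀) (hlam : 0 ≤ lam) :
    ∃ M > 0, ∀ᶠ t in atTop, ∀ s, |s| ≤ t / 2 → M * |s| ≤ t ^ lam →
      |f (t + s) - f t - deriv f t * s| ≤ 2 * M * deriv f t * s ^ 2 / t ^ lam := by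
  obtain ⟨X, c₁, c₂, hX, hc₁, hc₁₂, hbounds⟩ := hf.exists_bounds_on_Ici
  refine ⟨c₂ * 2 ^ lam, by positivity [hc₁.trans_le hc₁₂], ?_⟩
  filter_upwards [eventually_ge_atTop (2 * X)] with t ht s hs hsM
  have ht0 : 0 < t := by linarith
  have htlam : 0 < t ^ lam := rpow_pos_of_pos ht0 lam
  have hmem : ∀ y ∈ uIcc t (t + s), y ∈ Ici X ∧ t / 2 ≤ y := fun y hy => by
    have := abs_sub_left_of_mem_uIcc hy
    rw [add_sub_cancel_left] at this
    have := (abs_le.1 (this.trans hs)).1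
    exact ⟨by simp only [mem_Ici]; linarith, by linarith⟩
  -- `y ≥ t / 2` makes the upper growth bound uniform on the interval
  have hlogDeriv : ∀ y ∈ uIcc t (t + s), |logDeriv (deriv f) y| ≤ c₂ * 2 ^ lam / t ^ lam := by
    intro y hy
    obtain ⟨hyX, hyt⟩ := hmem y hy
    obtain ⟨-, -, -, hlow, hup⟩ := hbounds y hyX
    have hy0 : 0 < y := hX.trans_le hyX
    rw [abs_of_nonneg ((by positivity : 0 ≤ c₁ * y ^ (-lam)).trans hlow)]
    calc logDeriv (deriv f) y ≤ c₂ * y ^ (-lam) := hup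
      _ ≤ c₂ * (t / 2) ^ (-lam) := mul_le_mul_of_nonneg_left
          (rpow_le_rpow_of_nonpos (by positivity) hyt (neg_nonpos.2 hlam)) (hc₁.le.trans hc₁₂)
      _ = c₂ * 2 ^ lam / t ^ lam := by
          rw [div_rpow ht0.le zero_le_two, rpow_neg ht0.le, rpow_neg zero_le_two]
          field_simp
  have hsmall : c₂ * 2 ^ lam / t ^ lam * |t + s - t| ≤ 1 := by
    rw [add_sub_cancel_left, div_mul_eq_mul_div, div_le_one htlam]
    exact hsM
  have := abs_sub_sub_deriv_mul_le (fun y hy => (hbounds y (hmem y hy).1).1) fun y hy =>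
    abs_sub_le_of_abs_logDeriv_le (fun z hz => (hbounds z (hmem z hz).1).2.1)
      (fun z hz => (hbounds z (hmem z hz).1).2.2.1) hlogDeriv hsmall hy
  rw [add_sub_cancel_left] at this
  calc _ ≤ _ := this
    _ = _ := by rw [← sq_abs s]; field_simp

lemma GrowthCondition.eventually_deriv_pos {f : ℝ → ℝ} {lam x₀ : ℝ}
    (hf : GrowthCondition f lam x₀) : ∀ᶠ x in atTop, 0 < deriv f x :=
  let ⟨_, _, _, _, hpos, _⟩ := hf
  (eventually_ge_atTop x₀).mono hpos

lemma GrowthCondition.tendsto_mul_sub_sub_deriv_mul {f : ℝ → ℝ} {lam x₀ : ℝ}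
    (hf : GrowthCondition f lam x₀) (hlam : lam ∈ Icc (0 : ℝ) 1) {ι : Type*} {l : Filter ι}
    {ε γ τ s : ι → ℝ} (hε : ∀ᶠ i in l, 0 < ε i) (hτ : Tendsto τ l atTop)
    (hγ : Tendsto γ l atTop) (hfγ : Tendsto (fun i => f (τ i) * ε i - γ i) l (𝓝 0))
    (hσ : Tendsto (fun i => deriv f (τ i) * ε i * s i) l (𝓝 0)) :
    Tendsto (fun i => ε i * γ i * (f (τ i + s i) - f (τ i) - deriv f (τ i) * s i)) l (𝓝 0) := by
  obtain ⟨K, hK⟩ := hf.exists_eventually_le_mul_rpow_mul_deriv hlam.1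
  obtain ⟨M, hM, hTaylor⟩ := hf.exists_eventually_abs_sub_sub_deriv_mul_le hlam.1
  have hpos : ∀ᶠ x in atTop, 1 ≤ x ∧ 0 < deriv f x :=
    (eventually_ge_atTop 1).and hf.eventually_deriv_pos
  -- `γ ≈ f(τ) ε` is dominated by the natural scale `τ ^ lam * f'(τ) * ε`
  have hscale : ∀ᶠ i in l, 0 < ε i ∧ 0 < γ i ∧ 0 < deriv f (τ i) * ε i ∧
      γ i / (τ i ^ lam * (deriv f (τ i) * ε i)) ≤ 2 * K := by
    filter_upwards [hε, hτ.eventually hK, hτ.eventually hpos, hγ.eventually_ge_atTop 2,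
      hfγ.eventually (Ioi_mem_nhds neg_one_lt_zero)] with i hεi hKi hposi hγi hfγi
    have hτi : 0 < τ i ^ lam := rpow_pos_of_pos (by linarith [hposi.1]) lam
    have hf'ε := mul_pos hposi.2 hεi
    refine ⟨hεi, by linarith, hf'ε, (div_le_iff₀ (mul_pos hτi hf'ε)).2 ?_⟩
    have : f (τ i) * ε i ≤ K * (τ i ^ lam * (deriv f (τ i) * ε i)) :=
      calc f (τ i) * ε i ≤ K * (τ i ^ lam * deriv f (τ i)) * ε i := by gcongr
        _ = K * (τ i ^ lam * (deriv f (τ i) * ε i)) := by ring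
    linarith
  have hshift : Tendsto (fun i => |s i| / τ i ^ lam) l (𝓝 0) := by
    refine squeeze_zero'
      ((hτ.eventually_ge_atTop 0).mono fun i hi => div_nonneg (abs_nonneg _) (rpow_nonneg hi _)) ?_
      (by simpa only [abs_zero, mul_zero, zero_mul] using
        (hσ.abs.const_mul (2 * K)).mul (tendsto_inv_atTop_zero.comp hγ))
    filter_upwards [hscale] with i hi
    obtain ⟨-, hγi, hf'ε, hγP⟩ := hi
    calc |s i| / τ i ^ lam = γ i / (τ i ^ lam * (deriv f (τ i) * ε i)) *
          |deriv f (τ i) * ε i * s i| * (γ i)⁻¹ := by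
          rw [abs_mul (deriv f (τ i) * ε i), abs_of_pos hf'ε]
          generalize deriv f (τ i) * ε i = p at hf'ε ⊢
          field_simp
      _ ≤ 2 * K * |deriv f (τ i) * ε i * s i| * (γ i)⁻¹ := by gcongr
  have hbound : ∀ᶠ i in l, ‖ε i * γ i * (f (τ i + s i) - f (τ i) - deriv f (τ i) * s i)‖ ≤
      2 * M * (deriv f (τ i) * ε i * s i) ^ 2 * (2 * K) := by
    filter_upwards [hscale, hτ.eventually hpos, hτ.eventually hTaylor,
      hshift.eventually (Iic_mem_nhds (lt_min one_half_pos (inv_pos.2 hM)))]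
      with i hi hτi hTaylori hshifti
    obtain ⟨hεi, hγi, hf'ε, hγP⟩ := hi
    have hτlam : 0 < τ i ^ lam := rpow_pos_of_pos (by linarith [hτi.1]) lam
    have hτlam_le : τ i ^ lam ≤ τ i := by
      simpa using rpow_le_rpow_of_exponent_le hτi.1 hlam.2
    rw [le_min_iff, div_le_iff₀ hτlam, div_le_iff₀ hτlam] at hshifti
    have hrem := hTaylori (s i) (by linarith [hshifti.1])
      (by rw [← le_div_iff₀' hM, div_eq_inv_mul]; exact hshifti.2)
    calc _ = ε i * γ i * |f (τ i + s i) - f (τ i) - deriv f (τ i) * s i| := by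
          rw [Real.norm_eq_abs, abs_mul, abs_of_pos (mul_pos hεi hγi)]
      _ ≤ ε i * γ i * (2 * M * deriv f (τ i) * s i ^ 2 / τ i ^ lam) := by gcongr
      _ = 2 * M * (deriv f (τ i) * ε i * s i) ^ 2 *
          (γ i / (τ i ^ lam * (deriv f (τ i) * ε i))) := by
          field_simp
      _ ≤ _ := by gcongr
  refine squeeze_zero_norm' hbound ?_
  simpa using ((hσ.pow 2).const_mul (2 * M)).mul_const (2 * K)

theorem boundary_shift_expansion_general (f : ℝ → ℝ) (lam x₀ α β : ℝ)
    (γ τ₀ R Δ η : ℝ → ℝ)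
    (hlam : lam ∈ Set.Ioc (0 : ℝ) 1)
    (hf : GrowthCondition f lam x₀)
    (hγtop : Tendsto γ (𝓝[>] (0 : ℝ)) atTop)
    (hτ₀top : Tendsto τ₀ (𝓝[>] (0 : ℝ)) atTop)
    (hτ₀γ : Tendsto (fun ε => (f (τ₀ ε) * ε - γ ε) * γ ε) (𝓝[>] (0 : ℝ)) (𝓝 0))
    (hR : Tendsto (fun ε => R ε / Real.log (γ ε)) (𝓝[>] (0 : ℝ)) (𝓝 0))
    (hΔ : ∀ ε : ℝ, Δ ε =
      ((2 / α + β - 2) * Real.log (γ ε) / γ ε + R ε / γ ε) / (deriv f (τ₀ ε) * ε))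
    (hη : Tendsto (fun ε => η ε * (deriv f (τ₀ ε) * ε * γ ε)) (𝓝[>] (0 : ℝ)) (𝓝 0)) :
    Tendsto (fun ε =>
        (f (τ₀ ε + Δ ε + η ε) * ε -
          (γ ε + (2 / α + β - 2) * Real.log (γ ε) / γ ε + R ε / γ ε)) * γ ε)
      (𝓝[>] (0 : ℝ)) (𝓝 0) := by
  have hε : ∀ᶠ ε in 𝓝[>] (0 : ℝ), 0 < ε := self_mem_nhdsWithin
  have hlarge : ∀ᶠ ε in 𝓝[>] (0 : ℝ), 1 < γ ε ∧
      deriv f (τ₀ ε) * ε * Δ ε = (2 / α + β - 2) * log (γ ε) / γ ε + R ε / γ ε := by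
    filter_upwards [hε, hγtop.eventually_gt_atTop 1, hτ₀top.eventually hf.eventually_deriv_pos]
      with ε hεpos hγ hf'
    refine ⟨hγ, ?_⟩
    rw [hΔ]
    field_simp
  have hγinv : Tendsto (fun ε => (γ ε)⁻¹) (𝓝[>] (0 : ℝ)) (𝓝 0) :=
    tendsto_inv_atTop_zero.comp hγtop
  have hlogγ : Tendsto (fun ε => log (γ ε) / γ ε) (𝓝[>] (0 : ℝ)) (𝓝 0) :=
    ((tendsto_pow_log_div_mul_add_atTop 1 0 1 one_ne_zero).comp hγtop).congr fun ε => by simp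
  have hgap : Tendsto (fun ε => f (τ₀ ε) * ε - γ ε) (𝓝[>] (0 : ℝ)) (𝓝 0) := by
    have := hτ₀γ.mul hγinv
    rw [zero_mul] at this
    refine this.congr' ?_
    filter_upwards [hlarge] with ε hεl
    field_simp [(zero_lt_one.trans hεl.1).ne']
  have hσ : Tendsto (fun ε => deriv f (τ₀ ε) * ε * (Δ ε + η ε)) (𝓝[>] (0 : ℝ)) (𝓝 0) := by
    have := ((hlogγ.const_mul (2 / α + β - 2)).add (hR.mul hlogγ)).add (hη.mul hγinv)
    simp only [mul_zero, add_zero] at this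
    refine this.congr' ?_
    filter_upwards [hlarge] with ε hεl
    have hlog : log (γ ε) ≠ 0 := (log_pos hεl.1).ne'
    have hγ : γ ε ≠ 0 := (zero_lt_one.trans hεl.1).ne'
    rw [mul_add, hεl.2]
    field_simp
  have hrem := hf.tendsto_mul_sub_sub_deriv_mul ⟨hlam.1.le, hlam.2⟩ hε hτ₀top hγtop hgap hσ
  have := (hτ₀γ.add hrem).add hη
  simp only [add_zero] at this
  refine this.congr' ?_
  filter_upwards [hlarge] with ε hεl
  rw [← add_assoc (τ₀ ε)]
  linear_combination (-γ ε) * hεl.2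

/-- Lemma on the shifted boundary value: if `f(τ₀(ε))·ε = γ(ε) + o(1/γ(ε))`,
`R̃(ε) = o(ln γ(ε))` and `Δ(ε)` is the prescribed shift, then for any
`η(ε) = o(1/(f'(τ₀(ε))·ε·γ(ε)))` one has
`f(τ₀+Δ+η)·ε = γ + (2/α+β−2)·ln γ/γ + R̃/γ + o(1/γ)`. -/
theorem boundary_shift_expansion (f : ℝ → ℝ) (lam x₀ α β : ℝ)
    (γ τ₀ R Δ η : ℝ → ℝ)
    (hlam : lam ∈ Set.Ioc (0 : ℝ) 1)
    (hα : α ≠ 0)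
    (hf : GrowthCondition f lam x₀)
    (hγpos : ∀ ε : ℝ, 0 < ε → 0 < γ ε)
    (hτ₀pos : ∀ ε : ℝ, 0 < ε → 0 < τ₀ ε)
    (hγtop : Tendsto γ (𝓝[>] (0 : ℝ)) atTop)
    (hτ₀top : Tendsto τ₀ (𝓝[>] (0 : ℝ)) atTop)
    (hτ₀γ : Tendsto (fun ε => (f (τ₀ ε) * ε - γ ε) * γ ε) (𝓝[>] (0 : ℝ)) (𝓝 0))
    (hR : Tendsto (fun ε => R ε / Real.log (γ ε)) (𝓝[>] (0 : ℝ)) (𝓝 0))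
    (hΔ : ∀ ε : ℝ, Δ ε =
      ((2 / α + β - 2) * Real.log (γ ε) / γ ε + R ε / γ ε) / (deriv f (τ₀ ε) * ε))
    (hη : Tendsto (fun ε => η ε * (deriv f (τ₀ ε) * ε * γ ε)) (𝓝[>] (0 : ℝ)) (𝓝 0)) :
    Tendsto (fun ε =>
        (f (τ₀ ε + Δ ε + η ε) * ε -
          (γ ε + (2 / α + β - 2) * Real.log (γ ε) / γ ε + R ε / γ ε)) * γ ε)
      (𝓝[>] (0 : ℝ)) (𝓝 0) :=
  boundary_shift_expansion_general f lam x₀ α β γ τ₀ R Δ η hlam hf hγtop hτ₀top hτ₀γ hR hΔ hη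
end

section
/- Let q ∈ (0, 1) and define g(t) := (ln t)^{1/q − 1}/(q·t) for t > 1 (this is the derivative of the inverse of the function f(x) = exp(x^q)). Let γ(ε) be any positive function with γ(ε) → ∞ and ln γ(ε) = o(ln(1/ε)) as ε → 0⁺. Then, as ε → 0⁺: (i) sup_{y ∈ [γ(ε)/2, 2γ(ε)]} | y · g(y/ε) / g(1/ε) − 1 | → 0, i.e., uniformly over y ∈ [γ(ε)/2, 2γ(ε)] one has g(y/ε) ~ y^{−1}·g(1/ε); and (ii) sup_{y ≥ 2γ(ε)} g(y/ε)/g(1/ε) → 0. -/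
/-!
With `a = 1/q - 1` and `L = ln (1/ε)`, one has `g (y/ε) / g (1/ε) = (1 + ln y / L) ^ a / y`.
On `[γ/2, 2γ]` the quantity `|ln y| / L` is at most `(|ln γ| + ln 2) / L`, which tends to `0`,
so `y · g (y/ε) / g (1/ε) → 1` uniformly there. For `y ≥ 2γ` and `L ≥ 1` the ratio is at most
`(1 + ln y) ^ a / y`, a function of `y` alone that tends to `0` as `y → ∞`, while `2γ → ∞`.
-/

open Filter Set Topology Real

lemma tendsto_log_one_div_nhdsGT_zero :
    Tendsto (fun ε : ℝ => log (1 / ε)) (𝓝[>] 0) atTop := by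
  simpa only [one_div, log_inv, Function.comp_def] using
    tendsto_neg_atBot_atTop.comp tendsto_log_nhdsGT_zero

lemma div_eq_one_add_log_div_log_rpow_div {g : ℝ → ℝ} {a c : ℝ} (hc : c ≠ 0)
    (hg : ∀ t, g t = log t ^ a / (c * t)) {ε y : ℝ} (hε₀ : 0 < ε) (hε₁ : ε < 1)
    (hεy : ε ≤ y) :
    g (y / ε) / g (1 / ε) = (1 + log y / log (1 / ε)) ^ a / y := by
  have hy : 0 < y := hε₀.trans_le hεy
  have hL : 0 < log (1 / ε) := log_pos (by rwa [lt_div_iff₀ hε₀, one_mul])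
  have hlog : log (y / ε) = log (1 / ε) * (1 + log y / log (1 / ε)) := by
    rw [div_eq_mul_one_div y ε, log_mul hy.ne' (by positivity)]
    field_simp
    ring
  have hu : 0 ≤ 1 + log y / log (1 / ε) := by
    refine nonneg_of_mul_nonneg_right ?_ hL
    rw [← hlog]
    exact log_nonneg (by rwa [le_div_iff₀ hε₀, one_mul])
  rw [hg, hg, hlog, mul_rpow hL.le hu]
  have := (rpow_pos_of_pos hL a).ne'
  field_simp

lemma abs_log_le_abs_log_add_log_two {x y : ℝ} (hx : 0 < x) (hy : y ∈ Icc (x / 2) (2 * x)) :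
    |log y| ≤ |log x| + log 2 := by
  have hy₀ : 0 < y := by linarith [hy.1]
  have hupper : log y ≤ log x + log 2 := by
    calc log y ≤ log (2 * x) := log_le_log hy₀ hy.2
      _ = log x + log 2 := by rw [log_mul two_ne_zero hx.ne', add_comm]
  have hlower : log x - log 2 ≤ log y := by
    calc log x - log 2 = log (x / 2) := (log_div hx.ne' two_ne_zero).symm
      _ ≤ log y := log_le_log (by positivity) hy.1
  rw [abs_le]
  constructor <;> linarith [neg_abs_le (log x), le_abs_self (log x)]

lemma tendsto_one_add_log_rpow_div_atTop (a : ℝ) :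
    Tendsto (fun y => (1 + log y) ^ a / y) atTop (𝓝 0) := by
  have hlo : Tendsto (fun z => log z ^ a / z) atTop (𝓝 0) := by
    simpa only [rpow_one] using (isLittleO_log_rpow_rpow_atTop a one_pos).tendsto_div_nhds_zero
  have hcomp := (hlo.comp (tendsto_id.const_mul_atTop (exp_pos 1))).const_mul (exp 1)
  rw [mul_zero] at hcomp
  refine hcomp.congr' ?_
  filter_upwards [eventually_gt_atTop 0] with y hy
  simp only [Function.comp_apply, id]
  rw [log_mul (exp_pos 1).ne' hy.ne', log_exp]
  field_simp

lemma eventually_forall_mem_Icc_abs_log_div_log_lt {γ : ℝ → ℝ}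
    (hγpos : ∀ᶠ ε in 𝓝[>] 0, 0 < γ ε)
    (hγsmall : Tendsto (fun ε => log (γ ε) / log (1 / ε)) (𝓝[>] 0) (𝓝 0))
    {η : ℝ} (hη : 0 < η) :
    ∀ᶠ ε in 𝓝[>] (0 : ℝ), ∀ y ∈ Icc (γ ε / 2) (2 * γ ε), |log y / log (1 / ε)| < η := by
  have hbound : Tendsto (fun ε => |log (γ ε) / log (1 / ε)| + log 2 / log (1 / ε))
      (𝓝[>] 0) (𝓝 0) := by
    simpa using hγsmall.abs.add (tendsto_const_nhds.div_atTop tendsto_log_one_div_nhdsGT_zero)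
  filter_upwards [hγpos, tendsto_log_one_div_nhdsGT_zero.eventually_gt_atTop 0,
    hbound.eventually (eventually_lt_nhds hη)] with ε hγ hL hlt y hy
  calc |log y / log (1 / ε)| = |log y| / log (1 / ε) := by rw [abs_div, abs_of_pos hL]
    _ ≤ (|log (γ ε)| + log 2) / log (1 / ε) := by
      gcongr
      exact abs_log_le_abs_log_add_log_two hγ hy
    _ = |log (γ ε) / log (1 / ε)| + log 2 / log (1 / ε) := by rw [add_div, abs_div, abs_of_pos hL]
    _ < η := hlt

lemma eventually_forall_mem_Icc_abs_mul_div_sub_one_lt {g : ℝ → ℝ} {a c : ℝ} (hc : c ≠ 0)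
    (hg : ∀ t, g t = log t ^ a / (c * t)) {γ : ℝ → ℝ} (hγtop : Tendsto γ (𝓝[>] 0) atTop)
    (hγsmall : Tendsto (fun ε => log (γ ε) / log (1 / ε)) (𝓝[>] 0) (𝓝 0))
    {δ : ℝ} (hδ : 0 < δ) :
    ∀ᶠ ε in 𝓝[>] (0 : ℝ), ∀ y ∈ Icc (γ ε / 2) (2 * γ ε), |y * g (y / ε) / g (1 / ε) - 1| < δ := by
  obtain ⟨η, hη, hcont⟩ : ∃ η > 0, ∀ u : ℝ, |u| < η → |(1 + u) ^ a - 1| < δ := by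
    have : ContinuousAt (fun u : ℝ => (1 + u) ^ a) 0 :=
      (continuousAt_const.add continuousAt_id).rpow_const (Or.inl (by norm_num))
    simpa [Real.dist_eq] using Metric.continuousAt_iff.mp this δ hδ
  filter_upwards [eventually_forall_mem_Icc_abs_log_div_log_lt (hγtop.eventually_gt_atTop 0)
      hγsmall hη, hγtop.eventually_ge_atTop 2, Ioo_mem_nhdsGT one_pos] with ε hsmall hγ hε y hy
  have hεy : ε ≤ y := by linarith [hy.1, hε.2]
  rw [mul_div_assoc, div_eq_one_add_log_div_log_rpow_div hc hg hε.1 hε.2 hεy,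
    mul_div_cancel₀ _ (hε.1.trans_le hεy).ne']
  exact hcont _ (hsmall y hy)

lemma eventually_forall_ge_div_lt {g : ℝ → ℝ} {a c : ℝ} (ha : 0 ≤ a) (hc : c ≠ 0)
    (hg : ∀ t, g t = log t ^ a / (c * t)) {γ : ℝ → ℝ} (hγtop : Tendsto γ (𝓝[>] 0) atTop)
    {δ : ℝ} (hδ : 0 < δ) :
    ∀ᶠ ε in 𝓝[>] (0 : ℝ), ∀ y, 2 * γ ε ≤ y → g (y / ε) / g (1 / ε) < δ := by
  obtain ⟨Y, hY⟩ := eventually_atTop.mp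
    ((tendsto_one_add_log_rpow_div_atTop a).eventually (eventually_lt_nhds hδ))
  filter_upwards [hγtop.eventually_ge_atTop (max Y 1), Ioo_mem_nhdsGT one_pos,
    tendsto_log_one_div_nhdsGT_zero.eventually_ge_atTop 1] with ε hγ hε hL y hy
  have hy₁ : 1 ≤ y := by linarith [le_max_right Y 1]
  have hlog : 0 ≤ log y := log_nonneg hy₁
  rw [div_eq_one_add_log_div_log_rpow_div hc hg hε.1 hε.2 (hε.2.le.trans hy₁)]
  calc (1 + log y / log (1 / ε)) ^ a / y ≤ (1 + log y) ^ a / y := by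
        gcongr
        exact div_le_self hlog hL
    _ < δ := hY y (by linarith [le_max_left Y 1])

theorem exp_boundary_regularity_general (q : ℝ) (hq : q ∈ Set.Ioo (0 : ℝ) 1)
    (g : ℝ → ℝ)
    (hgdef : ∀ t : ℝ, g t = Real.log t ^ (1 / q - 1) / (q * t))
    (γ : ℝ → ℝ)
    (hγtop : Tendsto γ (𝓝[>] (0 : ℝ)) atTop)
    (hγsmall : Tendsto (fun ε => Real.log (γ ε) / Real.log (1 / ε)) (𝓝[>] (0 : ℝ)) (𝓝 0)) :
    (∀ δ > (0 : ℝ), ∀ᶠ ε in 𝓝[>] (0 : ℝ), ∀ y ∈ Set.Icc (γ ε / 2) (2 * γ ε),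
        |y * g (y / ε) / g (1 / ε) - 1| < δ) ∧
    (∀ δ > (0 : ℝ), ∀ᶠ ε in 𝓝[>] (0 : ℝ), ∀ y : ℝ, 2 * γ ε ≤ y →
        g (y / ε) / g (1 / ε) < δ) := by
  have ha : 0 ≤ 1 / q - 1 := by
    rw [sub_nonneg, le_div_iff₀ hq.1, one_mul]
    exact hq.2.le
  exact ⟨fun δ hδ => eventually_forall_mem_Icc_abs_mul_div_sub_one_lt hq.1.ne' hgdef hγtop
      hγsmall hδ,
    fun δ hδ => eventually_forall_ge_div_lt ha hq.1.ne' hgdef hγtop hδ⟩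

/-- Regularity of the derivative of the inverse of `f(x) = exp(x^q)`, `q ∈ (0,1)`:
with `g(t) = (ln t)^{1/q−1}/(q t)` and any positive `γ(ε) → ∞` with
`ln γ(ε) = o(ln(1/ε))`, one has, as `ε → 0⁺`, `g(y/ε) ~ y⁻¹ g(1/ε)` uniformly over
`y ∈ [γ(ε)/2, 2γ(ε)]`, and `sup_{y ≥ 2γ(ε)} g(y/ε)/g(1/ε) → 0`. -/
theorem exp_boundary_regularity (q : ℝ) (hq : q ∈ Set.Ioo (0 : ℝ) 1)
    (g : ℝ → ℝ)
    (hgdef : ∀ t : ℝ, g t = Real.log t ^ (1 / q - 1) / (q * t))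
    (γ : ℝ → ℝ)
    (hγpos : ∀ ε : ℝ, 0 < ε → 0 < γ ε)
    (hγtop : Tendsto γ (𝓝[>] (0 : ℝ)) atTop)
    (hγsmall : Tendsto (fun ε => Real.log (γ ε) / Real.log (1 / ε)) (𝓝[>] (0 : ℝ)) (𝓝 0)) :
    (∀ δ > (0 : ℝ), ∀ᶠ ε in 𝓝[>] (0 : ℝ), ∀ y ∈ Set.Icc (γ ε / 2) (2 * γ ε),
        |y * g (y / ε) / g (1 / ε) - 1| < δ) ∧
    (∀ δ > (0 : ℝ), ∀ᶠ ε in 𝓝[>] (0 : ℝ), ∀ y : ℝ, 2 * γ ε ≤ y →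
        g (y / ε) / g (1 / ε) < δ) :=
  exp_boundary_regularity_general q hq g hgdef γ hγtop hγsmall
end
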